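/- arXiv:1304.2167 — 8 statements merged into one kernel-verified Lean document; each statement's English description precedes it below -/
import Mathlib

section
/- The ℝ-linear map R(U,V): f ↦ U f + V f* is a bijection of H preserving the real inner product, i.e. Re⟪R(U,V) f, R(U,V) g⟫ = Re⟪f, g⟫ for all f, g ∈ H, if and only if the bounded operators U and V satisfy the orthogonality relations U U† + V V† = I = U† U + Vᵀ V̄ and U Vᵀ + V Uᵀ = 0 = U† V + Vᵀ Ū. -/
open scoped InnerProductSpace
open ContinuousLinearMap

/-!
Writing `R(U,V) f = U f + V f*`, the map `R' = R(U†, Vᵀ)` is the adjoint of `R(U,V)` for the real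
inner product `Re⟪·,·⟫`. Hence `R(U,V)` preserves `Re⟪·,·⟫` iff `R' ∘ R(U,V) = id`, and it is then
bijective iff also `R(U,V) ∘ R' = id`. Both composites are again of the form `f ↦ A f + B f*`, and
since the linear part `A` and the antilinear part `f ↦ B f*` of such a map are determined by it,
the two identities are exactly the four orthogonality relations.
-/

section RealAdjoint

variable {𝕜 E : Type*} [RCLike 𝕜] [NormedAddCommGroup E] [InnerProductSpace 𝕜 E]

open RCLike

theorem re_inner_map_map_eq_iff_leftInverse {R R' : E → E}
    (hadj : ∀ f g, re ⟪R f, g⟫_𝕜 = re ⟪f, R' g⟫_𝕜) :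
    (∀ f g, re ⟪R f, R g⟫_𝕜 = re ⟪f, g⟫_𝕜) ↔ Function.LeftInverse R' R := by
  have hadj' : ∀ f g, re ⟪R' f, g⟫_𝕜 = re ⟪f, R g⟫_𝕜 := fun f g => by
    rw [← inner_re_symm, ← hadj, inner_re_symm]
  constructor
  · intro hR f
    have hperp : ∀ g, re ⟪R' (R f) - f, g⟫_𝕜 = 0 := fun g => by
      rw [inner_sub_left, map_sub, hadj', hR, sub_self]
    exact sub_eq_zero.mp (re_inner_self_nonpos.mp (hperp _).le)
  · intro hinv f g
    rw [← hadj', hinv f]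

theorem bijective_and_re_inner_map_map_eq_iff {R R' : E → E}
    (hadj : ∀ f g, re ⟪R f, g⟫_𝕜 = re ⟪f, R' g⟫_𝕜) :
    (Function.Bijective R ∧ ∀ f g, re ⟪R f, R g⟫_𝕜 = re ⟪f, g⟫_𝕜) ↔
      Function.LeftInverse R' R ∧ Function.RightInverse R' R := by
  rw [re_inner_map_map_eq_iff_leftInverse hadj]
  constructor
  · rintro ⟨hbij, hleft⟩
    exact ⟨hleft, hleft.rightInverse_of_surjective hbij.surjective⟩
  · rintro ⟨hleft, hright⟩
    exact ⟨⟨hleft.injective, hright.surjective⟩, hleft⟩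

end RealAdjoint

theorem eq_zero_and_eq_zero_of_add_antilinear_eq_zero {E F G : Type*}
    [AddCommGroup E] [Module ℂ E] [TopologicalSpace E]
    [AddCommGroup F] [Module ℂ F] [TopologicalSpace F]
    [AddCommGroup G] [Module ℂ G] [TopologicalSpace G]
    {J : E → G} (hJ_smul : ∀ (c : ℂ) f, J (c • f) = (starRingEnd ℂ) c • J f)
    (hJ_surj : Function.Surjective J) {A : E →L[ℂ] F} {B : G →L[ℂ] F}
    (h : ∀ f, A f + B (J f) = 0) : A = 0 ∧ B = 0 := by
  -- replacing `f` by `I • f` flips the sign of the antilinear part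
  have hflip : ∀ f, A f - B (J f) = 0 := fun f => by
    have := h (Complex.I • f)
    rw [hJ_smul, map_smul, map_smul, Complex.conj_I, neg_smul, ← smul_neg, ← smul_add,
      ← sub_eq_add_neg] at this
    exact (smul_eq_zero.mp this).resolve_left Complex.I_ne_zero
  have hB : ∀ f, B (J f) = 0 := fun f => by
    have h2 : (2 : ℂ) • B (J f) = 0 :=
      calc (2 : ℂ) • B (J f) = (A f + B (J f)) - (A f - B (J f)) := by rw [two_smul]; abel
        _ = 0 := by rw [h f, hflip f, sub_zero]
    exact (smul_eq_zero.mp h2).resolve_left two_ne_zero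
  refine ⟨ext fun f => ?_, ext fun g => ?_⟩
  · simpa [hB f] using h f
  · obtain ⟨f, rfl⟩ := hJ_surj g
    exact hB f

section Bogoliubov

variable {E : Type*} [NormedAddCommGroup E]

def bogoliubovMap [NormedSpace ℂ E] (J : E → E) (U V : E →L[ℂ] E) (f : E) : E :=
  U f + V (J f)

theorem bogoliubovMap_eq_self_iff [NormedSpace ℂ E] {J : E → E}
    (hJ_smul : ∀ (c : ℂ) f, J (c • f) = (starRingEnd ℂ) c • J f)
    (hJ_surj : Function.Surjective J) {U V : E →L[ℂ] E} :
    (∀ f, bogoliubovMap J U V f = f) ↔ U = 1 ∧ V = 0 := by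
  constructor
  · intro h
    have h0 := eq_zero_and_eq_zero_of_add_antilinear_eq_zero hJ_smul hJ_surj
      (A := U - 1) (B := V) fun f => by
        rw [sub_apply, one_apply_eq_self, sub_add_eq_add_sub, sub_eq_zero]
        exact h f
    exact ⟨sub_eq_zero.mp h0.1, h0.2⟩
  · rintro ⟨rfl, rfl⟩ f
    simp [bogoliubovMap]

theorem bogoliubovMap_bogoliubovMap [NormedSpace ℂ E] {J : E → E}
    (hJ_add : ∀ f g, J (f + g) = J f + J g) (hJ_invol : ∀ f, J (J f) = f)
    (A B : E →L[ℂ] E) {C D Cbar Dbar : E →L[ℂ] E}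
    (hCbar : ∀ f, Cbar f = J (C (J f))) (hDbar : ∀ f, Dbar f = J (D (J f))) (f : E) :
    bogoliubovMap J A B (bogoliubovMap J C D f) =
      bogoliubovMap J (A ∘L C + B ∘L Dbar) (A ∘L D + B ∘L Cbar) f := by
  have hC : J (C f) = Cbar (J f) := by rw [hCbar, hJ_invol]
  simp only [bogoliubovMap, hJ_add, map_add, hC, ← hDbar, add_apply, comp_apply]
  abel

theorem re_inner_bogoliubovMap_left [InnerProductSpace ℂ E] [CompleteSpace E] {J : E → E}
    (hJ_invol : ∀ f, J (J f) = f) (hJ_inner : ∀ f g : E, ⟪J f, J g⟫_ℂ = ⟪g, f⟫_ℂ)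
    (U : E →L[ℂ] E) {V Vt : E →L[ℂ] E} (hVt : ∀ f, Vt f = J (adjoint V (J f))) (f g : E) :
    RCLike.re ⟪bogoliubovMap J U V f, g⟫_ℂ =
      RCLike.re ⟪f, bogoliubovMap J (adjoint U) Vt g⟫_ℂ := by
  have hV : ⟪f, Vt (J g)⟫_ℂ = (starRingEnd ℂ) ⟪V (J f), g⟫_ℂ := by
    rw [hVt, hJ_invol, ← hJ_inner, hJ_invol, adjoint_inner_left, inner_conj_symm]
  simp only [bogoliubovMap, inner_add_left, inner_add_right, map_add, adjoint_inner_right, hV,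
    RCLike.conj_re]

end Bogoliubov

theorem orthogonality_relations_iff_general
    {H : Type*} [NormedAddCommGroup H] [InnerProductSpace ℂ H] [CompleteSpace H]
    -- the antiunitary involution `f ↦ f* = J f`
    (J : H → H)
    (hJ_add : ∀ f g, J (f + g) = J f + J g)
    (hJ_smul : ∀ (c : ℂ) (f : H), J (c • f) = (starRingEnd ℂ) c • J f)
    (hJ_invol : ∀ f, J (J f) = f)
    (hJ_inner : ∀ f g : H, ⟪J f, J g⟫_ℂ = ⟪g, f⟫_ℂ)
    -- the bounded operators `U`, `V` and their conjugates `Ū`, `V̄` and transposes `Uᵀ`, `Vᵀ`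
    (U V Ubar Vbar Ut Vt : H →L[ℂ] H)
    (hUbar : ∀ f, Ubar f = J (U (J f)))
    (hVbar : ∀ f, Vbar f = J (V (J f)))
    (hUt : ∀ f, Ut f = J (adjoint U (J f)))
    (hVt : ∀ f, Vt f = J (adjoint V (J f))) :
    (Function.Bijective (fun f => U f + V (J f)) ∧
        ∀ f g : H, (⟪U f + V (J f), U g + V (J g)⟫_ℂ).re = (⟪f, g⟫_ℂ).re) ↔
      (U ∘L adjoint U + V ∘L adjoint V = 1 ∧
       adjoint U ∘L U + Vt ∘L Vbar = 1 ∧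
       U ∘L Vt + V ∘L Ut = 0 ∧
       adjoint U ∘L V + Vt ∘L Ubar = 0) := by
  have hJ_surj : Function.Surjective J := Function.Involutive.surjective hJ_invol
  have hV_adjoint : ∀ f, adjoint V f = J (Vt (J f)) := fun f => by rw [hVt, hJ_invol, hJ_invol]
  have key := bijective_and_re_inner_map_map_eq_iff
    (re_inner_bogoliubovMap_left hJ_invol hJ_inner U hVt)
  simp only [RCLike.re_to_complex, Function.LeftInverse, Function.RightInverse,
    bogoliubovMap_bogoliubovMap hJ_add hJ_invol _ _ hUbar hVbar,
    bogoliubovMap_bogoliubovMap hJ_add hJ_invol _ _ hUt hV_adjoint,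
    bogoliubovMap_eq_self_iff hJ_smul hJ_surj] at key
  exact key.trans (by tauto)

/-- The ℝ-linear map `R(U,V) : f ↦ U f + V f*` is a bijection of `H`
preserving the real inner product iff `U U† + V V† = I = U† U + Vᵀ V̄` and
`U Vᵀ + V Uᵀ = 0 = U† V + Vᵀ Ū`. -/
theorem orthogonality_relations_iff
    {H : Type*} [NormedAddCommGroup H] [InnerProductSpace ℂ H] [CompleteSpace H]
    [TopologicalSpace.SeparableSpace H]
    -- the antiunitary involution `f ↦ f* = J f`
    (J : H → H)
    (hJ_add : ∀ f g, J (f + g) = J f + J g)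
    (hJ_smul : ∀ (c : ℂ) (f : H), J (c • f) = (starRingEnd ℂ) c • J f)
    (hJ_invol : ∀ f, J (J f) = f)
    (hJ_inner : ∀ f g : H, ⟪J f, J g⟫_ℂ = ⟪g, f⟫_ℂ)
    -- the bounded operators `U`, `V` and their conjugates `Ū`, `V̄` and transposes `Uᵀ`, `Vᵀ`
    (U V Ubar Vbar Ut Vt : H →L[ℂ] H)
    (hUbar : ∀ f, Ubar f = J (U (J f)))
    (hVbar : ∀ f, Vbar f = J (V (J f)))
    (hUt : ∀ f, Ut f = J (adjoint U (J f)))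
    (hVt : ∀ f, Vt f = J (adjoint V (J f))) :
    (Function.Bijective (fun f => U f + V (J f)) ∧
        ∀ f g : H, (⟪U f + V (J f), U g + V (J g)⟫_ℂ).re = (⟪f, g⟫_ℂ).re) ↔
      (U ∘L adjoint U + V ∘L adjoint V = 1 ∧
       adjoint U ∘L U + Vt ∘L Vbar = 1 ∧
       U ∘L Vt + V ∘L Ut = 0 ∧
       adjoint U ∘L V + Vt ∘L Ubar = 0) :=
  orthogonality_relations_iff_general J hJ_add hJ_smul hJ_invol hJ_inner U V Ubar Vbar Ut Vt hUbar
    hVbar hUt hVt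
end

section
/- If bounded operators U, V on H satisfy the orthogonality relations U U† + V V† = I = U† U + Vᵀ V̄ and U Vᵀ + V Uᵀ = 0 = U† V + Vᵀ Ū, then R(U†, Vᵀ) ∘ R(U,V) = id_H = R(U,V) ∘ R(U†, Vᵀ); in particular R(U,V) is invertible with inverse R(U†, Vᵀ). -/
/-! Composing the real-linear maps `R(A,B) f = A f + B f*` gives
`R(C,D) ∘ R(A,B) = R(CA + D B̄, CB + D Ā)`. Since the conjugate of `Vᵀ` is `V†`, the
orthogonality relations say precisely that both composites in question are `R(1, 0) = id`. -/

open scoped InnerProductSpace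
open ContinuousLinearMap

theorem comp_add_conj_apply {R M : Type*} [Semiring R] [TopologicalSpace M] [AddCommMonoid M]
    [ContinuousAdd M] [Module R M] (J : M → M) (hJ_add : ∀ f g, J (f + g) = J f + J g)
    (hJ_invol : ∀ f, J (J f) = f) (A B C D Abar Bbar : M →L[R] M)
    (hAbar : ∀ f, Abar f = J (A (J f))) (hBbar : ∀ f, Bbar f = J (B (J f))) (f : M) :
    C (A f + B (J f)) + D (J (A f + B (J f))) =
      (C ∘L A + D ∘L Bbar) f + (C ∘L B + D ∘L Abar) (J f) := by
  simp only [hJ_add, hAbar, hBbar, hJ_invol, map_add, add_apply, comp_apply]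
  abel

theorem R_inverse_general
    {H : Type*} [NormedAddCommGroup H] [InnerProductSpace ℂ H] [CompleteSpace H]
    -- the antiunitary involution `f ↦ f* = J f`
    (J : H → H)
    (hJ_add : ∀ f g, J (f + g) = J f + J g)
    (hJ_invol : ∀ f, J (J f) = f)
    (U V Ubar Vbar Ut Vt : H →L[ℂ] H)
    (hUbar : ∀ f, Ubar f = J (U (J f)))
    (hVbar : ∀ f, Vbar f = J (V (J f)))
    (hUt : ∀ f, Ut f = J (adjoint U (J f)))
    (hVt : ∀ f, Vt f = J (adjoint V (J f)))
    -- the orthogonality relations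
    (h1 : U ∘L adjoint U + V ∘L adjoint V = 1)
    (h2 : adjoint U ∘L U + Vt ∘L Vbar = 1)
    (h3 : U ∘L Vt + V ∘L Ut = 0)
    (h4 : adjoint U ∘L V + Vt ∘L Ubar = 0) :
    (∀ f : H, adjoint U (U f + V (J f)) + Vt (J (U f + V (J f))) = f) ∧
    (∀ f : H, U (adjoint U f + Vt (J f)) + V (J (adjoint U f + Vt (J f))) = f) ∧
    Function.Bijective (fun f => U f + V (J f)) := by
  have hV_adj : ∀ f, adjoint V f = J (Vt (J f)) := fun f => by rw [hVt, hJ_invol, hJ_invol]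
  have left_inv : ∀ f : H, adjoint U (U f + V (J f)) + Vt (J (U f + V (J f))) = f := fun f => by
    rw [comp_add_conj_apply J hJ_add hJ_invol U V _ _ Ubar Vbar hUbar hVbar, h2, h4,
      one_apply_eq_self, _root_.zero_apply, add_zero]
  have right_inv : ∀ f : H,
      U (adjoint U f + Vt (J f)) + V (J (adjoint U f + Vt (J f))) = f := fun f => by
    rw [comp_add_conj_apply J hJ_add hJ_invol _ Vt U V Ut _ hUt hV_adj, h1, h3,
      one_apply_eq_self, _root_.zero_apply, add_zero]
  exact ⟨left_inv, right_inv, Function.bijective_iff_has_inverse.mpr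
    ⟨fun f => adjoint U f + Vt (J f), left_inv, right_inv⟩⟩

/-- If `U, V` satisfy the orthogonality relations, then
`R(U†, Vᵀ) ∘ R(U,V) = id = R(U,V) ∘ R(U†, Vᵀ)`; in particular `R(U,V)` is invertible with
inverse `R(U†, Vᵀ)`. -/
theorem R_inverse
    {H : Type*} [NormedAddCommGroup H] [InnerProductSpace ℂ H] [CompleteSpace H]
    [TopologicalSpace.SeparableSpace H]
    -- the antiunitary involution `f ↦ f* = J f`
    (J : H → H)
    (hJ_add : ∀ f g, J (f + g) = J f + J g)
    (hJ_smul : ∀ (c : ℂ) (f : H), J (c • f) = (starRingEnd ℂ) c • J f)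
    (hJ_invol : ∀ f, J (J f) = f)
    (hJ_inner : ∀ f g : H, ⟪J f, J g⟫_ℂ = ⟪g, f⟫_ℂ)
    (U V Ubar Vbar Ut Vt : H →L[ℂ] H)
    (hUbar : ∀ f, Ubar f = J (U (J f)))
    (hVbar : ∀ f, Vbar f = J (V (J f)))
    (hUt : ∀ f, Ut f = J (adjoint U (J f)))
    (hVt : ∀ f, Vt f = J (adjoint V (J f)))
    -- the orthogonality relations
    (h1 : U ∘L adjoint U + V ∘L adjoint V = 1)
    (h2 : adjoint U ∘L U + Vt ∘L Vbar = 1)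
    (h3 : U ∘L Vt + V ∘L Ut = 0)
    (h4 : adjoint U ∘L V + Vt ∘L Ubar = 0) :
    (∀ f : H, adjoint U (U f + V (J f)) + Vt (J (U f + V (J f))) = f) ∧
    (∀ f : H, U (adjoint U f + Vt (J f)) + V (J (adjoint U f + Vt (J f))) = f) ∧
    Function.Bijective (fun f => U f + V (J f)) :=
  R_inverse_general J hJ_add hJ_invol U V Ubar Vbar Ut Vt hUbar hVbar hUt hVt h1 h2 h3 h4
end

section
/- If the pairs (U₁,V₁) and (U₂,V₂) of bounded operators on H both satisfy the orthogonality relations U U† + V V† = I = U† U + Vᵀ V̄ and U Vᵀ + V Uᵀ = 0 = U† V + Vᵀ Ū, then the pair (U₃,V₃) := (U₂ U₁ + V₂ V̄₁, U₂ V₁ + V₂ Ū₁) also satisfies these orthogonality relations; if moreover V₁ and V₂ are Hilbert–Schmidt, then V₃ is Hilbert–Schmidt. -/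
open scoped InnerProductSpace
open ContinuousLinearMap

variable {H : Type*} [NormedAddCommGroup H] [InnerProductSpace ℂ H] [CompleteSpace H]

/-- `Abar` is the conjugate operator `Ā` of `A`: `Ā f = (A f*)*`. -/
def IsConjOf (J : H → H) (A Abar : H →L[ℂ] H) : Prop :=
  ∀ f, Abar f = J (A (J f))

/-- `At` is the transposed operator `Aᵀ` of `A`: `Aᵀ f = (A† f*)*`. -/
def IsTransposeOf (J : H → H) (A At : H →L[ℂ] H) : Prop :=
  ∀ f, At f = J (adjoint A (J f))

/-- The orthogonality relations `U U† + V V† = I = U† U + Vᵀ V̄` and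
`U Vᵀ + V Uᵀ = 0 = U† V + Vᵀ Ū`. -/
def OrthRel (U V Ubar Vbar Ut Vt : H →L[ℂ] H) : Prop :=
  U ∘L adjoint U + V ∘L adjoint V = 1 ∧
  adjoint U ∘L U + Vt ∘L Vbar = 1 ∧
  U ∘L Vt + V ∘L Ut = 0 ∧
  adjoint U ∘L V + Vt ∘L Ubar = 0

/-- `V` is a Hilbert–Schmidt operator: `∑ᵢ ‖V eᵢ‖² < ∞` for some Hilbert basis `(eᵢ)`. -/
def IsHilbertSchmidt (V : H →L[ℂ] H) : Prop :=
  ∃ (ι : Type) (e : HilbertBasis ι ℂ H), Summable fun i => ‖V (e i)‖ ^ 2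

/-!
The relations say exactly that the block operator `S = [[U, V], [V̄, Ū]]` on `H ⊕ H` is unitary:
the four stated relations are entries of `S† S = 1` and `S S† = 1`, and the other four entries
are their complex conjugates. The composition law is the block product `S₃ = S₂ S₁`, and unitaries
form a group. For the second claim, Hilbert–Schmidt operators form a two-sided ideal: a left ideal
by the operator-norm bound, and closed under adjoints by Parseval, since both
`∑ᵢ ‖V eᵢ‖²` and `∑ⱼ ‖V† fⱼ‖²` equal `∑ᵢⱼ |⟪fⱼ, V eᵢ⟫|²`.
-/

theorem Matrix.star_fin_two {R : Type*} [Star R] (a b c d : R) :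
    star !![a, b; c, d] = !![star a, star c; star b, star d] := by
  ext i j; fin_cases i <;> fin_cases j <;> rfl

theorem mem_unitary_iff_orthRel {U V Ubar Vbar : H →L[ℂ] H} :
    !![U, V; Vbar, Ubar] ∈ unitary (Matrix (Fin 2) (Fin 2) (H →L[ℂ] H)) ↔
      OrthRel U V Ubar Vbar (adjoint Ubar) (adjoint Vbar) ∧
        OrthRel Ubar Vbar U V (adjoint U) (adjoint V) := by
  simp only [Unitary.mem_iff, Matrix.star_fin_two, Matrix.mul_fin_two, Matrix.one_fin_two,
    star_eq_adjoint, OrthRel, ← mul_def, EmbeddingLike.apply_eq_iff_eq, Matrix.vecCons_inj,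
    and_true]
  rw [add_comm (Ubar * adjoint Ubar), add_comm (adjoint Ubar * Ubar), add_comm (Ubar * adjoint V),
    add_comm (adjoint Ubar * Vbar)]
  tauto

namespace IsConjOf

variable {E : Type*} [NormedAddCommGroup E] [InnerProductSpace ℂ E]
  {J : E → E} {A B Abar Bbar X : E →L[ℂ] E}

theorem unique (hA : IsConjOf J A Abar) (hX : IsConjOf J A X) : Abar = X :=
  ext fun f => (hA f).trans (hX f).symm

theorem symm (hJ : Function.Involutive J) (hA : IsConjOf J A Abar) : IsConjOf J Abar A :=
  fun f => by rw [hA, hJ, hJ]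

theorem comp (hJ : Function.Involutive J) (hA : IsConjOf J A Abar) (hB : IsConjOf J B Bbar) :
    IsConjOf J (A ∘L B) (Abar ∘L Bbar) :=
  fun f => by rw [comp_apply, comp_apply, hA, hB, hJ]

theorem add (hJ_add : ∀ f g, J (f + g) = J f + J g) (hA : IsConjOf J A Abar)
    (hB : IsConjOf J B Bbar) : IsConjOf J (A + B) (Abar + Bbar) :=
  fun f => by rw [add_apply, add_apply, hA, hB, hJ_add]

theorem eq_one (hJ : Function.Involutive J) (h : IsConjOf J A X) (hA : A = 1) : X = 1 :=
  ext fun f => by rw [h, hA, one_apply_eq_self, hJ, one_apply_eq_self]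

theorem eq_zero (hJ_add : ∀ f g, J (f + g) = J f + J g) (h : IsConjOf J A X) (hA : A = 0) :
    X = 0 := by
  have hJ_zero : J 0 = 0 := by simpa using hJ_add 0 0
  exact ext fun f => by rw [h, hA, zero_apply, hJ_zero, zero_apply]

theorem adjoint_eq [CompleteSpace E] (hJ : Function.Involutive J)
    (hJ_inner : ∀ f g : E, ⟪J f, J g⟫_ℂ = ⟪g, f⟫_ℂ) {At : E →L[ℂ] E}
    (hA : IsConjOf J A Abar) (hAt : IsTransposeOf J A At) : adjoint Abar = At := by
  refine ext fun f => ext_inner_right ℂ fun g => ?_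
  rw [adjoint_inner_left, hA, hAt, ← hJ_inner, hJ, ← adjoint_inner_right, ← hJ_inner, hJ]

end IsConjOf

section OrthRel

variable {J : H → H} {U V Ubar Vbar Ut Vt : H →L[ℂ] H}

theorem OrthRel.conj (hJ_add : ∀ f g, J (f + g) = J f + J g) (hJ : Function.Involutive J)
    (hUbar : IsConjOf J U Ubar) (hVbar : IsConjOf J V Vbar)
    (hUt : IsTransposeOf J U (adjoint Ubar)) (hVt : IsTransposeOf J V (adjoint Vbar))
    (h : OrthRel U V Ubar Vbar (adjoint Ubar) (adjoint Vbar)) :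
    OrthRel Ubar Vbar U V (adjoint U) (adjoint V) := by
  have hUt' : IsConjOf J (adjoint U) (adjoint Ubar) := hUt
  have hVt' : IsConjOf J (adjoint V) (adjoint Vbar) := hVt
  obtain ⟨h₁, h₂, h₃, h₄⟩ := h
  exact ⟨((hUbar.comp hJ hUt').add hJ_add (hVbar.comp hJ hVt')).eq_one hJ h₁,
    ((hUt'.comp hJ hUbar).add hJ_add ((hVt'.symm hJ).comp hJ (hVbar.symm hJ))).eq_one hJ h₂,
    ((hUbar.comp hJ (hVt'.symm hJ)).add hJ_add (hVbar.comp hJ (hUt'.symm hJ))).eq_zero hJ_add h₃,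
    ((hUt'.comp hJ hVbar).add hJ_add ((hVt'.symm hJ).comp hJ (hUbar.symm hJ))).eq_zero hJ_add h₄⟩

theorem OrthRel.mem_unitary (hJ_add : ∀ f g, J (f + g) = J f + J g) (hJ : Function.Involutive J)
    (hJ_inner : ∀ f g : H, ⟪J f, J g⟫_ℂ = ⟪g, f⟫_ℂ)
    (hUbar : IsConjOf J U Ubar) (hVbar : IsConjOf J V Vbar)
    (hUt : IsTransposeOf J U Ut) (hVt : IsTransposeOf J V Vt) (h : OrthRel U V Ubar Vbar Ut Vt) :
    !![U, V; Vbar, Ubar] ∈ unitary (Matrix (Fin 2) (Fin 2) (H →L[ℂ] H)) := by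
  obtain rfl := hUbar.adjoint_eq hJ hJ_inner hUt
  obtain rfl := hVbar.adjoint_eq hJ hJ_inner hVt
  exact mem_unitary_iff_orthRel.2 ⟨h, h.conj hJ_add hJ hUbar hVbar hUt hVt⟩

end OrthRel

section HilbertSchmidt

variable {𝕜 E F ι κ : Type*} [RCLike 𝕜] [NormedAddCommGroup E] [InnerProductSpace 𝕜 E]
  [NormedAddCommGroup F] [InnerProductSpace 𝕜 F]

theorem HilbertBasis.hasSum_norm_inner_sq (b : HilbertBasis ι 𝕜 E) (x : E) :
    HasSum (fun i => ‖⟪b i, x⟫_𝕜‖ ^ 2) (‖x‖ ^ 2) := by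
  simpa [b.repr_apply_apply] using lp.hasSum_norm (p := 2) (by norm_num) (b.repr x)

theorem summable_norm_adjoint_apply_sq [CompleteSpace E] [CompleteSpace F] (X : E →L[𝕜] F)
    (e : HilbertBasis ι 𝕜 E) (f : HilbertBasis κ 𝕜 F) (hX : Summable fun i => ‖X (e i)‖ ^ 2) :
    Summable fun j => ‖adjoint X (f j)‖ ^ 2 := by
  have hrows : Summable fun p : ι × κ => ‖⟪f p.2, X (e p.1)⟫_𝕜‖ ^ 2 := by
    refine (summable_prod_of_nonneg fun _ => by positivity).2 ⟨fun i => ?_, ?_⟩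
    · exact (f.hasSum_norm_inner_sq (X (e i))).summable
    · simpa only [(f.hasSum_norm_inner_sq _).tsum_eq] using hX
  have hcols := ((summable_prod_of_nonneg fun _ => by positivity).1 hrows.prod_symm).2
  have hswap (i : ι) (j : κ) : ‖⟪f j, X (e i)⟫_𝕜‖ = ‖⟪e i, adjoint X (f j)⟫_𝕜‖ := by
    rw [← adjoint_inner_left, norm_inner_symm]
  simp only [Prod.fst_swap, Prod.snd_swap, hswap, (e.hasSum_norm_inner_sq _).tsum_eq] at hcols
  exact hcols

end HilbertSchmidt

namespace IsHilbertSchmidt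

variable {E : Type*} [NormedAddCommGroup E] [InnerProductSpace ℂ E] {X Y : E →L[ℂ] E}

theorem summable [CompleteSpace E] (hX : IsHilbertSchmidt X) {ι : Type*}
    (e : HilbertBasis ι ℂ E) : Summable fun i => ‖X (e i)‖ ^ 2 := by
  obtain ⟨κ, f, hf⟩ := hX
  simpa only [adjoint_adjoint] using
    summable_norm_adjoint_apply_sq (adjoint X) e e (summable_norm_adjoint_apply_sq X f e hf)

theorem adjoint [CompleteSpace E] (hX : IsHilbertSchmidt X) :
    IsHilbertSchmidt (ContinuousLinearMap.adjoint X) :=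
  let ⟨ι, e, he⟩ := hX
  ⟨ι, e, summable_norm_adjoint_apply_sq X e e he⟩

theorem comp_left (A : E →L[ℂ] E) (hX : IsHilbertSchmidt X) : IsHilbertSchmidt (A ∘L X) := by
  obtain ⟨ι, e, he⟩ := hX
  refine ⟨ι, e, (he.mul_left (‖A‖ ^ 2)).of_nonneg_of_le (fun _ => by positivity) fun i => ?_⟩
  rw [comp_apply, ← mul_pow]
  gcongr
  exact A.le_opNorm _

theorem comp_right [CompleteSpace E] (A : E →L[ℂ] E) (hX : IsHilbertSchmidt X) :
    IsHilbertSchmidt (X ∘L A) := by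
  simpa only [adjoint_comp, adjoint_adjoint] using
    (hX.adjoint.comp_left (ContinuousLinearMap.adjoint A)).adjoint

theorem add [CompleteSpace E] (hX : IsHilbertSchmidt X) (hY : IsHilbertSchmidt Y) :
    IsHilbertSchmidt (X + Y) := by
  obtain ⟨ι, e, he⟩ := hX
  refine ⟨ι, e, ((he.add (hY.summable e)).mul_left 2).of_nonneg_of_le
    (fun _ => by positivity) fun i => ?_⟩
  calc ‖(X + Y) (e i)‖ ^ 2 ≤ (‖X (e i)‖ + ‖Y (e i)‖) ^ 2 := by
        gcongr; exact norm_add_le _ _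
    _ ≤ 2 * (‖X (e i)‖ ^ 2 + ‖Y (e i)‖ ^ 2) := add_sq_le

end IsHilbertSchmidt

theorem orthRel_comp_general
    -- the antiunitary involution `f ↦ f* = J f`
    (J : H → H)
    (hJ_add : ∀ f g, J (f + g) = J f + J g)
    (hJ_invol : ∀ f, J (J f) = f)
    (hJ_inner : ∀ f g : H, ⟪J f, J g⟫_ℂ = ⟪g, f⟫_ℂ)
    (U₁ V₁ U₁bar V₁bar U₁t V₁t : H →L[ℂ] H)
    (U₂ V₂ U₂bar V₂bar U₂t V₂t : H →L[ℂ] H)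
    (hU₁bar : IsConjOf J U₁ U₁bar) (hV₁bar : IsConjOf J V₁ V₁bar)
    (hU₁t : IsTransposeOf J U₁ U₁t) (hV₁t : IsTransposeOf J V₁ V₁t)
    (hU₂bar : IsConjOf J U₂ U₂bar) (hV₂bar : IsConjOf J V₂ V₂bar)
    (hU₂t : IsTransposeOf J U₂ U₂t) (hV₂t : IsTransposeOf J V₂ V₂t)
    (h₁ : OrthRel U₁ V₁ U₁bar V₁bar U₁t V₁t)
    (h₂ : OrthRel U₂ V₂ U₂bar V₂bar U₂t V₂t)
    -- conjugates and transposes of `U₃ = U₂ U₁ + V₂ V̄₁` and `V₃ = U₂ V₁ + V₂ Ū₁`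
    (U₃bar V₃bar U₃t V₃t : H →L[ℂ] H)
    (hU₃bar : IsConjOf J (U₂ ∘L U₁ + V₂ ∘L V₁bar) U₃bar)
    (hV₃bar : IsConjOf J (U₂ ∘L V₁ + V₂ ∘L U₁bar) V₃bar)
    (hU₃t : IsTransposeOf J (U₂ ∘L U₁ + V₂ ∘L V₁bar) U₃t)
    (hV₃t : IsTransposeOf J (U₂ ∘L V₁ + V₂ ∘L U₁bar) V₃t) :
    OrthRel (U₂ ∘L U₁ + V₂ ∘L V₁bar) (U₂ ∘L V₁ + V₂ ∘L U₁bar) U₃bar V₃bar U₃t V₃t ∧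
    (IsHilbertSchmidt V₁ → IsHilbertSchmidt V₂ →
      IsHilbertSchmidt (U₂ ∘L V₁ + V₂ ∘L U₁bar)) := by
  have hJ : Function.Involutive J := hJ_invol
  have hS₁ := h₁.mem_unitary hJ_add hJ hJ_inner hU₁bar hV₁bar hU₁t hV₁t
  have hS₂ := h₂.mem_unitary hJ_add hJ hJ_inner hU₂bar hV₂bar hU₂t hV₂t
  have hU₃bar_eq : U₃bar = U₂bar ∘L U₁bar + V₂bar ∘L V₁ :=
    hU₃bar.unique ((hU₂bar.comp hJ hU₁bar).add hJ_add (hV₂bar.comp hJ (hV₁bar.symm hJ)))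
  have hV₃bar_eq : V₃bar = U₂bar ∘L V₁bar + V₂bar ∘L U₁ :=
    hV₃bar.unique ((hU₂bar.comp hJ hV₁bar).add hJ_add (hV₂bar.comp hJ (hU₁bar.symm hJ)))
  have hprod : !![U₂, V₂; V₂bar, U₂bar] * !![U₁, V₁; V₁bar, U₁bar] =
      !![U₂ ∘L U₁ + V₂ ∘L V₁bar, U₂ ∘L V₁ + V₂ ∘L U₁bar; V₃bar, U₃bar] := by
    rw [Matrix.mul_fin_two, hU₃bar_eq, hV₃bar_eq, add_comm (V₂bar * U₁), add_comm (V₂bar * V₁)]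
    rfl
  obtain rfl := hU₃bar.adjoint_eq hJ hJ_inner hU₃t
  obtain rfl := hV₃bar.adjoint_eq hJ hJ_inner hV₃t
  refine ⟨(mem_unitary_iff_orthRel.1 (hprod ▸ mul_mem hS₂ hS₁)).1, fun hV₁ hV₂ => ?_⟩
  exact (hV₁.comp_left U₂).add (hV₂.comp_right U₁bar)

/-- The pairs satisfying the orthogonality relations are closed under the
composition law `(U₃,V₃) = (U₂ U₁ + V₂ V̄₁, U₂ V₁ + V₂ Ū₁)`; moreover if `V₁` and `V₂` are
Hilbert–Schmidt then so is `V₃`. -/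
theorem orthRel_comp
    [TopologicalSpace.SeparableSpace H]
    -- the antiunitary involution `f ↦ f* = J f`
    (J : H → H)
    (hJ_add : ∀ f g, J (f + g) = J f + J g)
    (hJ_smul : ∀ (c : ℂ) (f : H), J (c • f) = (starRingEnd ℂ) c • J f)
    (hJ_invol : ∀ f, J (J f) = f)
    (hJ_inner : ∀ f g : H, ⟪J f, J g⟫_ℂ = ⟪g, f⟫_ℂ)
    (U₁ V₁ U₁bar V₁bar U₁t V₁t : H →L[ℂ] H)
    (U₂ V₂ U₂bar V₂bar U₂t V₂t : H →L[ℂ] H)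
    (hU₁bar : IsConjOf J U₁ U₁bar) (hV₁bar : IsConjOf J V₁ V₁bar)
    (hU₁t : IsTransposeOf J U₁ U₁t) (hV₁t : IsTransposeOf J V₁ V₁t)
    (hU₂bar : IsConjOf J U₂ U₂bar) (hV₂bar : IsConjOf J V₂ V₂bar)
    (hU₂t : IsTransposeOf J U₂ U₂t) (hV₂t : IsTransposeOf J V₂ V₂t)
    (h₁ : OrthRel U₁ V₁ U₁bar V₁bar U₁t V₁t)
    (h₂ : OrthRel U₂ V₂ U₂bar V₂bar U₂t V₂t)
    -- conjugates and transposes of `U₃ = U₂ U₁ + V₂ V̄₁` and `V₃ = U₂ V₁ + V₂ Ū₁`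
    (U₃bar V₃bar U₃t V₃t : H →L[ℂ] H)
    (hU₃bar : IsConjOf J (U₂ ∘L U₁ + V₂ ∘L V₁bar) U₃bar)
    (hV₃bar : IsConjOf J (U₂ ∘L V₁ + V₂ ∘L U₁bar) V₃bar)
    (hU₃t : IsTransposeOf J (U₂ ∘L U₁ + V₂ ∘L V₁bar) U₃t)
    (hV₃t : IsTransposeOf J (U₂ ∘L V₁ + V₂ ∘L U₁bar) V₃t) :
    OrthRel (U₂ ∘L U₁ + V₂ ∘L V₁bar) (U₂ ∘L V₁ + V₂ ∘L U₁bar) U₃bar V₃bar U₃t V₃t ∧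
    (IsHilbertSchmidt V₁ → IsHilbertSchmidt V₂ →
      IsHilbertSchmidt (U₂ ∘L V₁ + V₂ ∘L U₁bar)) :=
  orthRel_comp_general J hJ_add hJ_invol hJ_inner U₁ V₁ U₁bar V₁bar U₁t V₁t U₂ V₂ U₂bar V₂bar U₂t
    V₂t hU₁bar hV₁bar hU₁t hV₁t hU₂bar hV₂bar hU₂t hV₂t h₁ h₂ U₃bar V₃bar U₃t V₃t hU₃bar hV₃bar hU₃t
    hV₃t
end

section
/- Suppose bounded operators U, V on H satisfy the orthogonality relations U U† + V V† = I = U† U + Vᵀ V̄ and U Vᵀ + V Uᵀ = 0 = U† V + Vᵀ Ū. Let P₀ be the orthogonal projection onto ker U† and Q₀ the orthogonal projection onto ker U, and define Q̄₀ by Q̄₀ f = (Q₀ f*)*. Then P₀ V = V Q̄₀; in particular V maps the subspace { f* : f ∈ (ker U)^⊥ } into (ker U†)^⊥, and Vᵀ maps { g* : g ∈ (ker U†)^⊥ } into (ker U)^⊥. -/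
open scoped InnerProductSpace
open ContinuousLinearMap

/-!
Write `Q̄₀ = J Q₀ J`; it is self-adjoint because `J` is antiunitary. Since `Ū Q̄₀ = J U Q₀ J = 0`,
the relation `U† V = -Vᵀ Ū` shows that `V Q̄₀` takes values in `ker U†`, so `P₀ V Q̄₀ = V Q̄₀`.
Dually, `U Vᵀ = -V Uᵀ` and `Uᵀ J P₀ = J U† P₀ = 0` show that `V† P₀` takes values in `J (ker U)`,
which `Q̄₀` fixes; the adjoint of `Q̄₀ V† P₀ = V† P₀` is `P₀ V Q̄₀ = P₀ V`. The two mapping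
statements are `P₀ V = V Q̄₀` evaluated at `J f` with `Q₀ f = 0`, resp. at `J x` with `x ∈ ker U`
together with `⟪x, Vᵀ (J g)⟫ = ⟪g, V (J x)⟫`.
-/

section

variable {H : Type*} [NormedAddCommGroup H] [InnerProductSpace ℂ H]

section Conjugation

variable {J : H → H}

theorem map_zero_of_inner_map_map (hJ_inner : ∀ f g : H, ⟪J f, J g⟫_ℂ = ⟪g, f⟫_ℂ) : J 0 = 0 :=
  inner_self_eq_zero.mp ((hJ_inner 0 0).trans (inner_zero_left _))

theorem inner_map_right_comm (hJ_invol : ∀ f, J (J f) = f)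
    (hJ_inner : ∀ f g : H, ⟪J f, J g⟫_ℂ = ⟪g, f⟫_ℂ) (f g : H) : ⟪f, J g⟫_ℂ = ⟪g, J f⟫_ℂ := by
  rw [← hJ_inner, hJ_invol]

theorem adjoint_apply_of_apply_eq_conj [CompleteSpace H] (hJ_invol : ∀ f, J (J f) = f)
    (hJ_inner : ∀ f g : H, ⟪J f, J g⟫_ℂ = ⟪g, f⟫_ℂ) {A B : H →L[ℂ] H}
    (hB : ∀ f, B f = J (A (J f))) (f : H) : adjoint B f = J (adjoint A (J f)) := by
  refine ext_inner_right ℂ fun g => ?_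
  rw [adjoint_inner_left, hB, inner_map_right_comm hJ_invol hJ_inner, ← adjoint_inner_right,
    ← hJ_invol (adjoint A (J f)), inner_map_right_comm hJ_invol hJ_inner, hJ_invol, hJ_invol]

end Conjugation

section Projection

variable {P : H →L[ℂ] H} {K : Submodule ℂ H}

theorem apply_eq_self_of_range_eq (hidem : P ∘L P = P)
    (hran : LinearMap.range (P : H →ₗ[ℂ] H) = K) {x : H} (hx : x ∈ K) : P x = x := by
  obtain ⟨y, rfl⟩ := hran ▸ hx
  exact congr($hidem y)

theorem apply_eq_zero_iff_of_range_eq [CompleteSpace H] (hidem : P ∘L P = P)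
    (hsa : adjoint P = P) (hran : LinearMap.range (P : H →ₗ[ℂ] H) = K) {x : H} :
    P x = 0 ↔ x ∈ Kᗮ := by
  subst hran
  obtain ⟨_, hP⟩ := isStarProjection_iff_eq_starProjection_range (p := P) |>.mp ⟨hidem, hsa⟩
  rw [show P x = _ from congr($hP x)]
  exact Submodule.starProjection_apply_eq_zero_iff _

end Projection

theorem comp_eq_comp_of_apply_eq_self [CompleteSpace H] {P Q V : H →L[ℂ] H}
    (hP : adjoint P = P) (hQ : adjoint Q = Q) (hPVQ : ∀ f, P (V (Q f)) = V (Q f))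
    (hQVP : ∀ g, Q (adjoint V (P g)) = adjoint V (P g)) :
    P ∘L V = V ∘L Q := by
  have hQVP' : Q ∘L adjoint V ∘L P = adjoint V ∘L P := ext hQVP
  have hPVQ' : (P ∘L V) ∘L Q = P ∘L V := by
    simpa only [adjoint_comp, adjoint_adjoint, hP, hQ] using congrArg adjoint hQVP'
  exact hPVQ'.symm.trans (ext hPVQ)

end

theorem proj_intertwines_V_general
    {H : Type*} [NormedAddCommGroup H] [InnerProductSpace ℂ H] [CompleteSpace H]
    -- the antiunitary involution `f ↦ f* = J f`
    (J : H → H)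
    (hJ_invol : ∀ f, J (J f) = f)
    (hJ_inner : ∀ f g : H, ⟪J f, J g⟫_ℂ = ⟪g, f⟫_ℂ)
    (U V Ubar Ut Vt : H →L[ℂ] H)
    (hUbar : ∀ f, Ubar f = J (U (J f)))
    (hUt : ∀ f, Ut f = J (adjoint U (J f)))
    (hVt : ∀ f, Vt f = J (adjoint V (J f)))
    -- the orthogonality relations
    (h3 : U ∘L Vt + V ∘L Ut = 0)
    (h4 : adjoint U ∘L V + Vt ∘L Ubar = 0)
    -- `P₀` is the orthogonal projection onto `ker U†`
    (P₀ : H →L[ℂ] H)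
    (hP₀idem : P₀ ∘L P₀ = P₀) (hP₀sa : adjoint P₀ = P₀)
    (hP₀ran : LinearMap.range (P₀ : H →ₗ[ℂ] H) = LinearMap.ker (adjoint U : H →ₗ[ℂ] H))
    -- `Q₀` is the orthogonal projection onto `ker U`, and `Q̄₀ f = (Q₀ f*)*`
    (Q₀ Q₀bar : H →L[ℂ] H)
    (hQ₀idem : Q₀ ∘L Q₀ = Q₀) (hQ₀sa : adjoint Q₀ = Q₀)
    (hQ₀ran : LinearMap.range (Q₀ : H →ₗ[ℂ] H) = LinearMap.ker (U : H →ₗ[ℂ] H))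
    (hQ₀bar : ∀ f, Q₀bar f = J (Q₀ (J f))) :
    P₀ ∘L V = V ∘L Q₀bar ∧
    (∀ f ∈ (LinearMap.ker (U : H →ₗ[ℂ] H))ᗮ, V (J f) ∈ (LinearMap.ker (adjoint U : H →ₗ[ℂ] H))ᗮ) ∧
    (∀ g ∈ (LinearMap.ker (adjoint U : H →ₗ[ℂ] H))ᗮ, Vt (J g) ∈ (LinearMap.ker (U : H →ₗ[ℂ] H))ᗮ) := by
  have hJ0 : J 0 = 0 := map_zero_of_inner_map_map hJ_inner
  have hQbar_sa : adjoint Q₀bar = Q₀bar := by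
    ext f
    rw [adjoint_apply_of_apply_eq_conj hJ_invol hJ_inner hQ₀bar, hQ₀sa, hQ₀bar]
  have hQbar_fix {x : H} (hx : U x = 0) : Q₀bar (J x) = J x := by
    rw [hQ₀bar, hJ_invol, apply_eq_self_of_range_eq hQ₀idem hQ₀ran hx]
  have hVQbar_mem (f : H) : adjoint U (V (Q₀bar f)) = 0 := by
    have hUbar0 : Ubar (Q₀bar f) = 0 := by
      have hUQ₀ : U (Q₀ (J f)) = 0 := hQ₀ran.le (LinearMap.mem_range_self _ _)
      rw [hUbar, hQ₀bar, hJ_invol, hUQ₀, hJ0]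
    simpa [hUbar0] using congr($h4 (Q₀bar f))
  have hQbar_adjV (g : H) : Q₀bar (adjoint V (P₀ g)) = adjoint V (P₀ g) := by
    have hUt0 : Ut (J (P₀ g)) = 0 := by
      have hUadjP₀ : adjoint U (P₀ g) = 0 := hP₀ran.le (LinearMap.mem_range_self _ _)
      rw [hUt, hJ_invol, hUadjP₀, hJ0]
    have hUVt : U (Vt (J (P₀ g))) = 0 := by
      simpa [hUt0] using congr($h3 (J (P₀ g)))
    simpa [hVt, hJ_invol] using hQbar_fix hUVt
  have hmain : P₀ ∘L V = V ∘L Q₀bar := comp_eq_comp_of_apply_eq_self hP₀sa hQbar_sa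
    (fun f => apply_eq_self_of_range_eq hP₀idem hP₀ran (hVQbar_mem f)) hQbar_adjV
  refine ⟨hmain, fun f hf => ?_, fun g hg x hx => ?_⟩
  · rw [← apply_eq_zero_iff_of_range_eq hQ₀idem hQ₀sa hQ₀ran] at hf
    rw [← apply_eq_zero_iff_of_range_eq hP₀idem hP₀sa hP₀ran]
    simpa [hQ₀bar, hJ_invol, hf, hJ0] using congr($hmain (J f))
  · rw [hVt, hJ_invol, inner_map_right_comm hJ_invol hJ_inner, adjoint_inner_left]
    exact inner_eq_zero_symm.mp (hg _ (hQbar_fix hx ▸ hVQbar_mem (J x)))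

/-- Under the orthogonality relations, with `P₀` the orthogonal projection
onto `ker U†`, `Q₀` the orthogonal projection onto `ker U` and `Q̄₀ f = (Q₀ f*)*`, one has
`P₀ V = V Q̄₀`; in particular `V` maps `{ f* : f ∈ (ker U)ᗮ }` into `(ker U†)ᗮ` and
`Vᵀ` maps `{ g* : g ∈ (ker U†)ᗮ }` into `(ker U)ᗮ`. -/
theorem proj_intertwines_V
    {H : Type*} [NormedAddCommGroup H] [InnerProductSpace ℂ H] [CompleteSpace H]
    [TopologicalSpace.SeparableSpace H]
    -- the antiunitary involution `f ↦ f* = J f`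
    (J : H → H)
    (hJ_add : ∀ f g, J (f + g) = J f + J g)
    (hJ_smul : ∀ (c : ℂ) (f : H), J (c • f) = (starRingEnd ℂ) c • J f)
    (hJ_invol : ∀ f, J (J f) = f)
    (hJ_inner : ∀ f g : H, ⟪J f, J g⟫_ℂ = ⟪g, f⟫_ℂ)
    (U V Ubar Vbar Ut Vt : H →L[ℂ] H)
    (hUbar : ∀ f, Ubar f = J (U (J f)))
    (hVbar : ∀ f, Vbar f = J (V (J f)))
    (hUt : ∀ f, Ut f = J (adjoint U (J f)))
    (hVt : ∀ f, Vt f = J (adjoint V (J f)))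
    -- the orthogonality relations
    (h1 : U ∘L adjoint U + V ∘L adjoint V = 1)
    (h2 : adjoint U ∘L U + Vt ∘L Vbar = 1)
    (h3 : U ∘L Vt + V ∘L Ut = 0)
    (h4 : adjoint U ∘L V + Vt ∘L Ubar = 0)
    -- `P₀` is the orthogonal projection onto `ker U†`
    (P₀ : H →L[ℂ] H)
    (hP₀idem : P₀ ∘L P₀ = P₀) (hP₀sa : adjoint P₀ = P₀)
    (hP₀ran : LinearMap.range (P₀ : H →ₗ[ℂ] H) = LinearMap.ker (adjoint U : H →ₗ[ℂ] H))
    -- `Q₀` is the orthogonal projection onto `ker U`, and `Q̄₀ f = (Q₀ f*)*`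
    (Q₀ Q₀bar : H →L[ℂ] H)
    (hQ₀idem : Q₀ ∘L Q₀ = Q₀) (hQ₀sa : adjoint Q₀ = Q₀)
    (hQ₀ran : LinearMap.range (Q₀ : H →ₗ[ℂ] H) = LinearMap.ker (U : H →ₗ[ℂ] H))
    (hQ₀bar : ∀ f, Q₀bar f = J (Q₀ (J f))) :
    P₀ ∘L V = V ∘L Q₀bar ∧
    (∀ f ∈ (LinearMap.ker (U : H →ₗ[ℂ] H))ᗮ, V (J f) ∈ (LinearMap.ker (adjoint U : H →ₗ[ℂ] H))ᗮ) ∧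
    (∀ g ∈ (LinearMap.ker (adjoint U : H →ₗ[ℂ] H))ᗮ, Vt (J g) ∈ (LinearMap.ker (U : H →ₗ[ℂ] H))ᗮ) :=
  proj_intertwines_V_general J hJ_invol hJ_inner U V Ubar Ut Vt hUbar hUt hVt h3 h4 P₀ hP₀idem hP₀sa
    hP₀ran Q₀ Q₀bar hQ₀idem hQ₀sa hQ₀ran hQ₀bar
end

section
/- Suppose bounded operators U, V on H satisfy the orthogonality relations U U† + V V† = I = U† U + Vᵀ V̄ and U Vᵀ + V Uᵀ = 0 = U† V + Vᵀ Ū. Then V restricts to an isometric linear bijection from the subspace (ker U)* := { f* : f ∈ ker U } onto ker U†, and V† restricts to the inverse isometry from ker U† onto (ker U)*; in particular V† V g = g for all g ∈ (ker U)* and V V† h = h for all h ∈ ker U†. -/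
/-!
Each claim is one of the four orthogonality relations evaluated at a single vector, after the
conjugations in `Ū`, `V̄`, `Uᵀ`, `Vᵀ` are unfolded with `J ∘ J = id`: at `f ∈ ker U` the second
gives `V†V f* = f*` and the fourth `U†V f* = 0`; at `h ∈ ker U†` the first gives `VV† h = h`
and the third `U (V† h)* = 0`. So `V` and `V†` are mutually inverse between `(ker U)*` and
`ker U†`, and a map with a left inverse given by its adjoint is isometric.
-/

open scoped InnerProductSpace
open ContinuousLinearMap

theorem ContinuousLinearMap.norm_apply_eq_of_adjoint_apply_apply_eq
    {𝕜 E F : Type*} [RCLike 𝕜] [NormedAddCommGroup E] [InnerProductSpace 𝕜 E] [CompleteSpace E]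
    [NormedAddCommGroup F] [InnerProductSpace 𝕜 F] [CompleteSpace F]
    (T : E →L[𝕜] F) {x : E} (hx : adjoint T (T x) = x) : ‖T x‖ = ‖x‖ := by
  rw [norm_eq_sqrt_re_inner (𝕜 := 𝕜), norm_eq_sqrt_re_inner (𝕜 := 𝕜), ← adjoint_inner_right, hx]

section OrthogonalityRelations

variable {H : Type*} [NormedAddCommGroup H] [InnerProductSpace ℂ H] [CompleteSpace H]
  {J : H → H} {U V : H →L[ℂ] H}

theorem adjoint_apply_apply_conj_of_apply_eq_zero (hJ_invol : ∀ f, J (J f) = f)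
    {Vbar Vt : H →L[ℂ] H} (hVbar : ∀ f, Vbar f = J (V (J f)))
    (hVt : ∀ f, Vt f = J (adjoint V (J f))) (h2 : adjoint U ∘L U + Vt ∘L Vbar = 1)
    {f : H} (hf : U f = 0) : adjoint V (V (J f)) = J f := by
  have h2f : J (adjoint V (V (J f))) = f := by
    simpa [hf, hVbar, hVt, hJ_invol] using congr($h2 f)
  simpa [hJ_invol] using congrArg J h2f

theorem adjoint_apply_apply_conj_eq_zero_of_apply_eq_zero (hJ_invol : ∀ f, J (J f) = f)
    (hJ_zero : J 0 = 0) {Ubar Vt : H →L[ℂ] H} (hUbar : ∀ f, Ubar f = J (U (J f)))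
    (h4 : adjoint U ∘L V + Vt ∘L Ubar = 0) {f : H} (hf : U f = 0) :
    adjoint U (V (J f)) = 0 := by
  simpa [hUbar, hJ_invol, hf, hJ_zero] using congr($h4 (J f))

theorem apply_conj_adjoint_apply_eq_zero_of_adjoint_apply_eq_zero (hJ_invol : ∀ f, J (J f) = f)
    (hJ_zero : J 0 = 0) {Ut Vt : H →L[ℂ] H} (hUt : ∀ f, Ut f = J (adjoint U (J f)))
    (hVt : ∀ f, Vt f = J (adjoint V (J f))) (h3 : U ∘L Vt + V ∘L Ut = 0)
    {h : H} (hh : adjoint U h = 0) : U (J (adjoint V h)) = 0 := by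
  simpa [hUt, hVt, hJ_invol, hh, hJ_zero] using congr($h3 (J h))

theorem apply_adjoint_apply_of_adjoint_apply_eq_zero (h1 : U ∘L adjoint U + V ∘L adjoint V = 1)
    {h : H} (hh : adjoint U h = 0) : V (adjoint V h) = h := by
  simpa [hh] using congr($h1 h)

end OrthogonalityRelations

theorem V_isometry_on_ker_general
    {H : Type*} [NormedAddCommGroup H] [InnerProductSpace ℂ H] [CompleteSpace H]
    -- the antiunitary involution `f ↦ f* = J f`
    (J : H → H)
    (hJ_add : ∀ f g, J (f + g) = J f + J g)
    (hJ_invol : ∀ f, J (J f) = f)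
    (U V Ubar Vbar Ut Vt : H →L[ℂ] H)
    (hUbar : ∀ f, Ubar f = J (U (J f)))
    (hVbar : ∀ f, Vbar f = J (V (J f)))
    (hUt : ∀ f, Ut f = J (adjoint U (J f)))
    (hVt : ∀ f, Vt f = J (adjoint V (J f)))
    -- the orthogonality relations
    (h1 : U ∘L adjoint U + V ∘L adjoint V = 1)
    (h2 : adjoint U ∘L U + Vt ∘L Vbar = 1)
    (h3 : U ∘L Vt + V ∘L Ut = 0)
    (h4 : adjoint U ∘L V + Vt ∘L Ubar = 0) :
    Set.BijOn V (J '' (LinearMap.ker (U : H →ₗ[ℂ] H) : Set H)) (LinearMap.ker (adjoint U : H →ₗ[ℂ] H) : Set H) ∧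
    (∀ g ∈ J '' (LinearMap.ker (U : H →ₗ[ℂ] H) : Set H), ‖V g‖ = ‖g‖) ∧
    (∀ h ∈ LinearMap.ker (adjoint U : H →ₗ[ℂ] H),
      adjoint V h ∈ J '' (LinearMap.ker (U : H →ₗ[ℂ] H) : Set H) ∧ ‖adjoint V h‖ = ‖h‖) ∧
    (∀ g ∈ J '' (LinearMap.ker (U : H →ₗ[ℂ] H) : Set H), adjoint V (V g) = g) ∧
    (∀ h ∈ LinearMap.ker (adjoint U : H →ₗ[ℂ] H), V (adjoint V h) = h) := by
  have hJ_zero : J 0 = 0 := (AddMonoidHom.mk' J hJ_add).map_zero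
  have left_inv : ∀ g ∈ J '' (LinearMap.ker (U : H →ₗ[ℂ] H) : Set H), adjoint V (V g) = g := by
    rintro _ ⟨f, hf, rfl⟩
    exact adjoint_apply_apply_conj_of_apply_eq_zero hJ_invol hVbar hVt h2 hf
  have right_inv : ∀ h ∈ LinearMap.ker (adjoint U : H →ₗ[ℂ] H), V (adjoint V h) = h :=
    fun h hh ↦ apply_adjoint_apply_of_adjoint_apply_eq_zero h1 hh
  have maps_to : Set.MapsTo V (J '' (LinearMap.ker (U : H →ₗ[ℂ] H) : Set H))
      (LinearMap.ker (adjoint U : H →ₗ[ℂ] H) : Set H) := by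
    rintro _ ⟨f, hf, rfl⟩
    exact adjoint_apply_apply_conj_eq_zero_of_apply_eq_zero hJ_invol hJ_zero hUbar h4 hf
  have adjoint_maps_to : Set.MapsTo (adjoint V) (LinearMap.ker (adjoint U : H →ₗ[ℂ] H) : Set H)
      (J '' (LinearMap.ker (U : H →ₗ[ℂ] H) : Set H)) := fun h hh ↦
    ⟨J (adjoint V h),
      apply_conj_adjoint_apply_eq_zero_of_adjoint_apply_eq_zero hJ_invol hJ_zero hUt hVt h3 hh,
      hJ_invol _⟩
  refine ⟨Set.InvOn.bijOn ⟨left_inv, right_inv⟩ maps_to adjoint_maps_to,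
    fun g hg ↦ V.norm_apply_eq_of_adjoint_apply_apply_eq (left_inv g hg),
    fun h hh ↦ ⟨adjoint_maps_to hh, ?_⟩, left_inv, right_inv⟩
  exact (adjoint V).norm_apply_eq_of_adjoint_apply_apply_eq
    (by rw [adjoint_adjoint, right_inv h hh])

/-- Under the orthogonality relations, `V` restricts to an isometric
bijection from `(ker U)* = { f* : f ∈ ker U }` onto `ker U†`, with inverse isometry the
restriction of `V†`; in particular `V†V g = g` on `(ker U)*` and `VV† h = h` on `ker U†`. -/
theorem V_isometry_on_ker
    {H : Type*} [NormedAddCommGroup H] [InnerProductSpace ℂ H] [CompleteSpace H]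
    [TopologicalSpace.SeparableSpace H]
    -- the antiunitary involution `f ↦ f* = J f`
    (J : H → H)
    (hJ_add : ∀ f g, J (f + g) = J f + J g)
    (hJ_smul : ∀ (c : ℂ) (f : H), J (c • f) = (starRingEnd ℂ) c • J f)
    (hJ_invol : ∀ f, J (J f) = f)
    (hJ_inner : ∀ f g : H, ⟪J f, J g⟫_ℂ = ⟪g, f⟫_ℂ)
    (U V Ubar Vbar Ut Vt : H →L[ℂ] H)
    (hUbar : ∀ f, Ubar f = J (U (J f)))
    (hVbar : ∀ f, Vbar f = J (V (J f)))
    (hUt : ∀ f, Ut f = J (adjoint U (J f)))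
    (hVt : ∀ f, Vt f = J (adjoint V (J f)))
    -- the orthogonality relations
    (h1 : U ∘L adjoint U + V ∘L adjoint V = 1)
    (h2 : adjoint U ∘L U + Vt ∘L Vbar = 1)
    (h3 : U ∘L Vt + V ∘L Ut = 0)
    (h4 : adjoint U ∘L V + Vt ∘L Ubar = 0) :
    Set.BijOn V (J '' (LinearMap.ker (U : H →ₗ[ℂ] H) : Set H)) (LinearMap.ker (adjoint U : H →ₗ[ℂ] H) : Set H) ∧
    (∀ g ∈ J '' (LinearMap.ker (U : H →ₗ[ℂ] H) : Set H), ‖V g‖ = ‖g‖) ∧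
    (∀ h ∈ LinearMap.ker (adjoint U : H →ₗ[ℂ] H),
      adjoint V h ∈ J '' (LinearMap.ker (U : H →ₗ[ℂ] H) : Set H) ∧ ‖adjoint V h‖ = ‖h‖) ∧
    (∀ g ∈ J '' (LinearMap.ker (U : H →ₗ[ℂ] H) : Set H), adjoint V (V g) = g) ∧
    (∀ h ∈ LinearMap.ker (adjoint U : H →ₗ[ℂ] H), V (adjoint V h) = h) :=
  V_isometry_on_ker_general J hJ_add hJ_invol U V Ubar Vbar Ut Vt hUbar hVbar hUt hVt h1 h2 h3 h4
end

section
/- Suppose bounded operators U, V on H satisfy the orthogonality relations U U† + V V† = I = U† U + Vᵀ V̄ and U Vᵀ + V Uᵀ = 0 = U† V + Vᵀ Ū, and V is Hilbert–Schmidt. Let Q̄₁ denote the orthogonal projection onto { f* : f ∈ (ker U)^⊥ } and P₁ the orthogonal projection onto (ker U†)^⊥. Then the operator norms satisfy ‖V Q̄₁‖ < 1 and ‖V† P₁‖ < 1. -/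
/-!
The finite-rank truncations of a Hilbert–Schmidt operator converge to it in operator norm, so `V`
is compact. The orthogonality relations give `U U† + V V† = 1` and `U† U + Vᵀ (Vᵀ)† = 1`, where
`(Vᵀ)† = V̄` is compact together with `V`. For `A A† + B B† = 1` with `B B†` compact, `‖B† g‖ < ‖g‖`
holds uniformly on unit vectors `g ⊥ ker A†`: otherwise `‖A† gₙ‖ → 0` along unit `gₙ ⊥ ker A†`,
compactness makes `gₙ = A A† gₙ + B B† gₙ` converge along a subsequence, and the limit is a unit
vector in both `ker A†` and its orthogonal complement.
-/

open scoped InnerProductSpace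
open ContinuousLinearMap Filter Topology

variable {H : Type*} [NormedAddCommGroup H] [InnerProductSpace ℂ H] [CompleteSpace H]

theorem IsCompactOperator.comp_continuous {M₁ M₂ M₃ : Type*} [TopologicalSpace M₁]
    [TopologicalSpace M₂] [TopologicalSpace M₃] [Zero M₁] [Zero M₂] {f : M₂ → M₃}
    (hf : IsCompactOperator f) {g : M₁ → M₂} (hg : Continuous g) (hg0 : g 0 = 0) :
    IsCompactOperator (f ∘ g) := by
  obtain ⟨K, hK, hKf⟩ := hf
  exact ⟨K, hK, hg.tendsto' 0 0 hg0 hKf⟩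

theorem opNorm_comp_lt_one_of_norm_apply_le_mul {𝕜 E F : Type*} [NontriviallyNormedField 𝕜]
    [SeminormedAddCommGroup E] [SeminormedAddCommGroup F] [NormedSpace 𝕜 E] [NormedSpace 𝕜 F]
    {T : E →L[𝕜] F} {P : E →L[𝕜] E} {c : ℝ} (hc0 : 0 ≤ c)
    (hc1 : c < 1) (hP : ‖P‖ ≤ 1) (hT : ∀ f, ‖T (P f)‖ ≤ c * ‖P f‖) : ‖T ∘L P‖ < 1 := by
  refine (opNorm_le_bound _ hc0 fun f => ?_).trans_lt hc1
  calc ‖T (P f)‖ ≤ c * ‖P f‖ := hT f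
    _ ≤ c * ‖f‖ := by gcongr; simpa using P.le_of_opNorm_le hP f

section HilbertSchmidt

variable {𝕜 E F ι : Type*} [RCLike 𝕜] [NormedAddCommGroup E] [InnerProductSpace 𝕜 E]
  [NormedAddCommGroup F] [NormedSpace 𝕜 F]

theorem HilbertBasis.opNorm_le_sqrt_tsum_norm_sq (e : HilbertBasis ι 𝕜 E) (T : E →L[𝕜] F)
    (hT : Summable fun i => ‖T (e i)‖ ^ 2) : ‖T‖ ≤ √(∑' i, ‖T (e i)‖ ^ 2) := by
  refine T.opNorm_le_bound (Real.sqrt_nonneg _) fun x => ?_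
  have hTx : HasSum (fun i => e.repr x i • T (e i)) (T x) := by
    simpa using (e.hasSum_repr x).mapL T
  have hx : Summable fun i => ‖e.repr x i‖ ^ (2 : ℝ) := by
    simpa [e.repr_apply_apply] using e.orthonormal.inner_products_summable (x := x)
  obtain ⟨hsum, hHolder⟩ := Real.summable_and_inner_le_Lp_mul_Lq_tsum_of_nonneg
    .two_two (fun i => norm_nonneg (e.repr x i)) (fun i => norm_nonneg (T (e i))) hx
    (by simpa using hT)
  have hBessel : ∑' i, ‖e.repr x i‖ ^ (2 : ℝ) ≤ ‖x‖ ^ (2 : ℝ) := by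
    simpa [e.repr_apply_apply] using e.orthonormal.tsum_inner_products_le x
  calc ‖T x‖ = ‖∑' i, e.repr x i • T (e i)‖ := by rw [hTx.tsum_eq]
    _ ≤ ∑' i, ‖e.repr x i • T (e i)‖ := norm_tsum_le_tsum_norm (by simpa [norm_smul] using hsum)
    _ = ∑' i, ‖e.repr x i‖ * ‖T (e i)‖ := by simp only [norm_smul]
    _ ≤ (∑' i, ‖e.repr x i‖ ^ (2 : ℝ)) ^ (1 / 2 : ℝ) *
          (∑' i, ‖T (e i)‖ ^ (2 : ℝ)) ^ (1 / 2 : ℝ) := hHolder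
    _ ≤ (‖x‖ ^ (2 : ℝ)) ^ (1 / 2 : ℝ) * (∑' i, ‖T (e i)‖ ^ (2 : ℝ)) ^ (1 / 2 : ℝ) := by
        gcongr
    _ = √(∑' i, ‖T (e i)‖ ^ 2) * ‖x‖ := by
        rw [← Real.rpow_mul (norm_nonneg x), ← Real.sqrt_eq_rpow]
        norm_num [mul_comm]

variable [CompleteSpace F]

theorem HilbertBasis.isCompactOperator_of_summable_norm_sq (e : HilbertBasis ι 𝕜 E)
    (T : E →L[𝕜] F) (hT : Summable fun i => ‖T (e i)‖ ^ 2) : IsCompactOperator T := by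
  classical
  set truncation : Finset ι → E →L[𝕜] F :=
    fun s => ∑ i ∈ s, toSpanSingleton 𝕜 (T (e i)) ∘L innerSL 𝕜 (e i)
  have norm_sq_truncation_apply (s : Finset ι) (j : ι) :
      ‖(T - truncation s) (e j)‖ ^ 2 = ((↑s : Set ι)ᶜ.indicator fun i => ‖T (e i)‖ ^ 2) j := by
    by_cases hj : j ∈ s <;>
      simp [truncation, sum_apply, orthonormal_iff_ite.1 e.orthonormal, hj]
  have hdist (s : Finset ι) : ‖truncation s - T‖ ≤ √(∑' i : {i // i ∉ s}, ‖T (e i)‖ ^ 2) := by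
    calc ‖truncation s - T‖ = ‖T - truncation s‖ := norm_sub_rev _ _
      _ ≤ √(∑' j, ‖(T - truncation s) (e j)‖ ^ 2) :=
        e.opNorm_le_sqrt_tsum_norm_sq _
          ((hT.indicator _).congr fun j => (norm_sq_truncation_apply s j).symm)
      _ = √(∑' i : {i // i ∉ s}, ‖T (e i)‖ ^ 2) := by
        simp_rw [norm_sq_truncation_apply]
        exact congrArg _ (tsum_subtype _ _).symm
  have hcompact (s : Finset ι) : IsCompactOperator (truncation s) :=
    Submodule.sum_mem (compactOperator (RingHom.id 𝕜) E F) fun i _ =>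
      (isCompactOperator_of_locallyCompactSpace_rng (toSpanSingleton 𝕜 (T (e i)))).comp_clm
        (innerSL 𝕜 (e i))
  refine isCompactOperator_of_tendsto (l := atTop) (F := truncation) ?_ (.of_forall hcompact)
  rw [tendsto_iff_norm_sub_tendsto_zero]
  refine squeeze_zero (fun _ => norm_nonneg _) hdist ?_
  simpa using (tendsto_tsum_compl_atTop_zero fun i => ‖T (e i)‖ ^ 2).sqrt

end HilbertSchmidt

theorem IsHilbertSchmidt.isCompactOperator {V : H →L[ℂ] H} (hV : IsHilbertSchmidt V) :
    IsCompactOperator V := by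
  obtain ⟨ι, e, hsum⟩ := hV
  exact e.isCompactOperator_of_summable_norm_sq V hsum

section Contraction

variable {𝕜 E : Type*} [RCLike 𝕜] [NormedAddCommGroup E] [InnerProductSpace 𝕜 E] [CompleteSpace E]
  {A B : E →L[𝕜] E}

theorem norm_adjoint_sq_add_norm_adjoint_sq (hAB : A ∘L adjoint A + B ∘L adjoint B = 1) (x : E) :
    ‖adjoint A x‖ ^ 2 + ‖adjoint B x‖ ^ 2 = ‖x‖ ^ 2 := by
  rw [apply_norm_sq_eq_inner_adjoint_right, apply_norm_sq_eq_inner_adjoint_right,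
    adjoint_adjoint, adjoint_adjoint, ← map_add, ← inner_add_right, ← add_apply, hAB,
    one_apply_eq_self, inner_self_eq_norm_sq]

theorem not_tendsto_norm_adjoint_apply_one (hAB : A ∘L adjoint A + B ∘L adjoint B = 1)
    (hB : IsCompactOperator (B ∘L adjoint B)) {g : ℕ → E}
    (hgK : ∀ n, g n ∈ (LinearMap.ker (adjoint A : E →ₗ[𝕜] E))ᗮ) (hg : ∀ n, ‖g n‖ = 1) :
    ¬ Tendsto (fun n => ‖adjoint B (g n)‖) atTop (𝓝 1) := by
  intro hBg
  have hAg : Tendsto (fun n => adjoint A (g n)) atTop (𝓝 0) := by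
    have hsq : Tendsto (fun n => ‖adjoint A (g n)‖ ^ 2) atTop (𝓝 0) := by
      have h := (tendsto_const_nhds (x := (1 : ℝ))).sub (hBg.pow 2)
      rw [one_pow, sub_self] at h
      refine h.congr fun n => ?_
      have h1 := norm_adjoint_sq_add_norm_adjoint_sq hAB (g n)
      rw [hg n, one_pow] at h1
      linarith
    rw [tendsto_zero_iff_norm_tendsto_zero]
    simpa using hsq.sqrt
  obtain ⟨a, -, φ, hφ, hBBg⟩ :=
    (IsCompactOperator.isCompact_closure_image_closedBall (f := (B ∘L adjoint B : E →ₗ[𝕜] E))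
      hB 1).tendsto_subseq fun n => subset_closure ⟨g n, by simp [hg n], rfl⟩
  have hAg' := hAg.comp hφ.tendsto_atTop
  have hga : Tendsto (g ∘ φ) atTop (𝓝 a) := by
    have h := ((A.continuous.tendsto 0).comp hAg').add hBBg
    rw [map_zero, zero_add] at h
    refine h.congr fun k => ?_
    simpa using congr($hAB (g (φ k)))
  have haK : a ∈ (LinearMap.ker (adjoint A : E →ₗ[𝕜] E))ᗮ :=
    (Submodule.isClosed_orthogonal _).mem_of_tendsto hga (.of_forall fun k => hgK (φ k))
  have haker : adjoint A a = 0 :=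
    tendsto_nhds_unique (((adjoint A).continuous.tendsto a).comp hga) hAg'
  have ha0 : a = 0 := inner_self_eq_zero.mp ((Submodule.mem_orthogonal _ a).mp haK a haker)
  have ha1 : ‖a‖ = 1 := tendsto_nhds_unique hga.norm (by simp [hg])
  simp [ha0] at ha1

theorem exists_norm_adjoint_apply_le_mul_of_isCompactOperator
    (hAB : A ∘L adjoint A + B ∘L adjoint B = 1) (hB : IsCompactOperator (B ∘L adjoint B)) :
    ∃ c, 0 ≤ c ∧ c < 1 ∧
      ∀ g ∈ (LinearMap.ker (adjoint A : E →ₗ[𝕜] E))ᗮ, ‖adjoint B g‖ ≤ c * ‖g‖ := by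
  by_contra! h
  have hseq (n : ℕ) : ∃ g ∈ (LinearMap.ker (adjoint A : E →ₗ[𝕜] E))ᗮ,
      ‖g‖ = 1 ∧ 1 - 1 / ((n : ℝ) + 1) < ‖adjoint B g‖ := by
    obtain ⟨g, hgK, hg⟩ := h (1 - 1 / ((n : ℝ) + 1))
      (by rw [sub_nonneg]; exact div_le_one_of_le₀ (by simp) (by positivity)) (by simp; positivity)
    have hg0 : g ≠ 0 := by rintro rfl; simp at hg
    refine ⟨(‖g‖⁻¹ : 𝕜) • g, Submodule.smul_mem _ _ hgK, norm_smul_inv_norm hg0, ?_⟩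
    rw [map_smul, norm_smul, norm_inv, RCLike.norm_ofReal, abs_norm, ← div_eq_inv_mul,
      lt_div_iff₀ (norm_pos_iff.mpr hg0)]
    exact hg
  choose g hgK hg hlt using hseq
  refine not_tendsto_norm_adjoint_apply_one hAB hB hgK hg ?_
  have hle (n : ℕ) : ‖adjoint B (g n)‖ ≤ 1 := by
    rw [← hg n, ← sq_le_sq₀ (norm_nonneg _) (norm_nonneg _)]
    linarith [norm_adjoint_sq_add_norm_adjoint_sq hAB (g n), sq_nonneg ‖adjoint A (g n)‖]
  refine tendsto_of_tendsto_of_tendsto_of_le_of_le ?_ tendsto_const_nhds (fun n => (hlt n).le) hle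
  simpa using (tendsto_one_div_add_atTop_nhds_zero_nat (𝕜 := ℝ)).const_sub 1

end Contraction

section Conjugation

variable {𝕜 E : Type*} [RCLike 𝕜] [NormedAddCommGroup E] [InnerProductSpace 𝕜 E] {J : E → E}

theorem norm_apply_eq_of_inner_map_map (hJ : ∀ f g, ⟪J f, J g⟫_𝕜 = ⟪g, f⟫_𝕜) (x : E) :
    ‖J x‖ = ‖x‖ := by
  rw [@norm_eq_sqrt_re_inner 𝕜, hJ, ← @norm_eq_sqrt_re_inner 𝕜]

theorem isometry_of_map_add_of_inner_map_map (hJ_add : ∀ f g, J (f + g) = J f + J g)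
    (hJ : ∀ f g, ⟪J f, J g⟫_𝕜 = ⟪g, f⟫_𝕜) : Isometry J :=
  AddMonoidHomClass.isometry_of_norm (AddMonoidHom.mk' J hJ_add)
    (norm_apply_eq_of_inner_map_map hJ)

theorem adjoint_transpose_eq_conj [CompleteSpace E] (hJ : ∀ f g, ⟪J f, J g⟫_𝕜 = ⟪g, f⟫_𝕜)
    (hJJ : ∀ f, J (J f) = f) {T Tt Tbar : E →L[𝕜] E} (hTt : ∀ f, Tt f = J (adjoint T (J f)))
    (hTbar : ∀ f, Tbar f = J (T (J f))) : adjoint Tt = Tbar := by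
  refine ((eq_adjoint_iff Tbar Tt).2 fun x y => ?_).symm
  calc ⟪Tbar x, y⟫_𝕜 = ⟪J (T (J x)), J (J y)⟫_𝕜 := by rw [hTbar, hJJ]
    _ = ⟪J y, T (J x)⟫_𝕜 := hJ _ _
    _ = ⟪adjoint T (J y), J x⟫_𝕜 := (adjoint_inner_left _ _ _).symm
    _ = ⟪J (J x), J (adjoint T (J y))⟫_𝕜 := (hJ _ _).symm
    _ = ⟪x, Tt y⟫_𝕜 := by rw [hJJ, hTt]

end Conjugation

theorem norm_V_lt_one_general
    -- the antiunitary involution `f ↦ f* = J f`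
    (J : H → H)
    (hJ_add : ∀ f g, J (f + g) = J f + J g)
    (hJ_invol : ∀ f, J (J f) = f)
    (hJ_inner : ∀ f g : H, ⟪J f, J g⟫_ℂ = ⟪g, f⟫_ℂ)
    (U V Vbar Vt : H →L[ℂ] H)
    (hVbar : ∀ f, Vbar f = J (V (J f)))
    (hVt : ∀ f, Vt f = J (adjoint V (J f)))
    -- the orthogonality relations
    (h1 : U ∘L adjoint U + V ∘L adjoint V = 1)
    (h2 : adjoint U ∘L U + Vt ∘L Vbar = 1)
    (hV : IsHilbertSchmidt V)
    -- `Q̄₁` is the orthogonal projection onto `{ f* : f ∈ (ker U)ᗮ }`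
    (Q₁bar : H →L[ℂ] H)
    (hQ₁idem : Q₁bar ∘L Q₁bar = Q₁bar) (hQ₁sa : adjoint Q₁bar = Q₁bar)
    (hQ₁ran : Set.range Q₁bar = J '' ((LinearMap.ker (U : H →ₗ[ℂ] H))ᗮ : Set H))
    -- `P₁` is the orthogonal projection onto `(ker U†)ᗮ`
    (P₁ : H →L[ℂ] H)
    (hP₁idem : P₁ ∘L P₁ = P₁) (hP₁sa : adjoint P₁ = P₁)
    (hP₁ran : LinearMap.range (P₁ : H →ₗ[ℂ] H) = (LinearMap.ker (adjoint U : H →ₗ[ℂ] H))ᗮ) :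
    ‖V ∘L Q₁bar‖ < 1 ∧ ‖adjoint V ∘L P₁‖ < 1 := by
  have hJ_norm := norm_apply_eq_of_inner_map_map hJ_inner
  have hJ_cont := (isometry_of_map_add_of_inner_map_map hJ_add hJ_inner).continuous
  have hJ_zero : J 0 = 0 := map_zero (AddMonoidHom.mk' J hJ_add)
  have hV_cpt := hV.isCompactOperator
  have hVt_adj : adjoint Vt = Vbar := adjoint_transpose_eq_conj hJ_inner hJ_invol hVt hVbar
  constructor
  · have hVtVbar : ⇑(Vt ∘L Vbar) = J ∘ (adjoint V ∘ V) ∘ J := by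
      ext f; simp [hVt, hVbar, hJ_invol]
    obtain ⟨c, hc0, hc1, hc⟩ := exists_norm_adjoint_apply_le_mul_of_isCompactOperator
      (A := adjoint U) (B := Vt) (by rwa [adjoint_adjoint, hVt_adj])
      (by rw [hVt_adj, hVtVbar]
          exact ((hV_cpt.clm_comp _).continuous_comp hJ_cont).comp_continuous hJ_cont hJ_zero)
    refine opNorm_comp_lt_one_of_norm_apply_le_mul hc0 hc1
      (IsStarProjection.norm_le _ ⟨hQ₁idem, hQ₁sa⟩) fun f => ?_
    obtain ⟨g, hg, hJg⟩ : Q₁bar f ∈ J '' _ := hQ₁ran ▸ Set.mem_range_self f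
    have hJQf : J (Q₁bar f) ∈ (LinearMap.ker (adjoint (adjoint U) : H →ₗ[ℂ] H))ᗮ := by
      rwa [adjoint_adjoint, ← hJg, hJ_invol]
    simpa [hVt_adj, hVbar, hJ_invol, hJ_norm] using hc _ hJQf
  · obtain ⟨c, hc0, hc1, hc⟩ :=
      exists_norm_adjoint_apply_le_mul_of_isCompactOperator h1 (hV_cpt.comp_clm _)
    exact opNorm_comp_lt_one_of_norm_apply_le_mul hc0 hc1
      (IsStarProjection.norm_le _ ⟨hP₁idem, hP₁sa⟩) fun f => hc _ (hP₁ran ▸ ⟨f, rfl⟩)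

/-- Under the orthogonality relations, with `V` Hilbert–Schmidt, `Q̄₁` the
orthogonal projection onto `{ f* : f ∈ (ker U)ᗮ }` and `P₁` the orthogonal projection onto
`(ker U†)ᗮ`, the operator norms satisfy `‖V Q̄₁‖ < 1` and `‖V† P₁‖ < 1`. -/
theorem norm_V_lt_one
    [TopologicalSpace.SeparableSpace H]
    -- the antiunitary involution `f ↦ f* = J f`
    (J : H → H)
    (hJ_add : ∀ f g, J (f + g) = J f + J g)
    (hJ_smul : ∀ (c : ℂ) (f : H), J (c • f) = (starRingEnd ℂ) c • J f)
    (hJ_invol : ∀ f, J (J f) = f)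
    (hJ_inner : ∀ f g : H, ⟪J f, J g⟫_ℂ = ⟪g, f⟫_ℂ)
    (U V Ubar Vbar Ut Vt : H →L[ℂ] H)
    (hUbar : ∀ f, Ubar f = J (U (J f)))
    (hVbar : ∀ f, Vbar f = J (V (J f)))
    (hUt : ∀ f, Ut f = J (adjoint U (J f)))
    (hVt : ∀ f, Vt f = J (adjoint V (J f)))
    -- the orthogonality relations
    (h1 : U ∘L adjoint U + V ∘L adjoint V = 1)
    (h2 : adjoint U ∘L U + Vt ∘L Vbar = 1)
    (h3 : U ∘L Vt + V ∘L Ut = 0)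
    (h4 : adjoint U ∘L V + Vt ∘L Ubar = 0)
    (hV : IsHilbertSchmidt V)
    -- `Q̄₁` is the orthogonal projection onto `{ f* : f ∈ (ker U)ᗮ }`
    (Q₁bar : H →L[ℂ] H)
    (hQ₁idem : Q₁bar ∘L Q₁bar = Q₁bar) (hQ₁sa : adjoint Q₁bar = Q₁bar)
    (hQ₁ran : Set.range Q₁bar = J '' ((LinearMap.ker (U : H →ₗ[ℂ] H))ᗮ : Set H))
    -- `P₁` is the orthogonal projection onto `(ker U†)ᗮ`
    (P₁ : H →L[ℂ] H)
    (hP₁idem : P₁ ∘L P₁ = P₁) (hP₁sa : adjoint P₁ = P₁)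
    (hP₁ran : LinearMap.range (P₁ : H →ₗ[ℂ] H) = (LinearMap.ker (adjoint U : H →ₗ[ℂ] H))ᗮ) :
    ‖V ∘L Q₁bar‖ < 1 ∧ ‖adjoint V ∘L P₁‖ < 1 :=
  norm_V_lt_one_general J hJ_add hJ_invol hJ_inner U V Vbar Vt hVbar hVt h1 h2 hV Q₁bar hQ₁idem
    hQ₁sa hQ₁ran P₁ hP₁idem hP₁sa hP₁ran
end

section
/- Let X be a skew-symmetric (Xᵀ = −X) Hilbert–Schmidt operator on H. Define L := (I + X X†)^{−1/2} (the inverse of the positive square root of the positive invertible operator I + X X†) and W := X (I + X† X)^{−1/2}. Then L is positive, W is skew symmetric (Wᵀ = −W), the pair (L, W) satisfies the orthogonality relations L L† + W W† = I = L† L + Wᵀ W̄ and L Wᵀ + W Lᵀ = 0 = L† W + Wᵀ L̄, and W L̄⁻¹ = X. -/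
open scoped InnerProductSpace
open ContinuousLinearMap

variable {H : Type*} [NormedAddCommGroup H] [InnerProductSpace ℂ H] [CompleteSpace H]

/-!
Everything follows from two facts. First, `X L' = L X`: from `X (I + X† X) = (I + X X†) X` one gets
`L² X = X L'²`, and an element intertwining two positive operators also intertwines their positive
square roots, because intertwining passes to polynomials and hence, by uniform approximation on the
spectra, to the continuous functional calculus. Second, `L̄ = L'`: skew symmetry says `X̄ = -X†`, so
conjugation carries `I + X X†` to `I + X† X`; thus `L̄` is a positive operator with
`L̄² (I + X† X) = I`, and positive square roots are unique. It follows that `Lᵀ = L'`, `Wᵀ = -W`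
and `W̄ = -W†`, after which the relations are identities in the operator algebra.
-/

open Polynomial in
lemma SemiconjBy.aeval {R A : Type*} [CommSemiring R] [Semiring A] [Algebra R A] {x a b : A}
    (h : SemiconjBy x a b) (p : R[X]) : SemiconjBy x (aeval a p) (aeval b p) := by
  induction p using Polynomial.induction_on' with
  | add p q hp hq => simpa only [map_add] using hp.add_right hq
  | monomial n c =>
    simpa only [aeval_monomial] using
      SemiconjBy.mul_right (Algebra.commute_algebraMap_right c x) (h.pow_right n)

open Polynomial Filter in
lemma exists_polynomial_tendstoUniformlyOn_Icc {a b : ℝ} {f : ℝ → ℝ}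
    (hf : ContinuousOn f (Set.Icc a b)) :
    ∃ p : ℕ → ℝ[X], TendstoUniformlyOn (fun n t ↦ (p n).eval t) f atTop (Set.Icc a b) := by
  choose p hp using fun n : ℕ ↦
    exists_polynomial_near_of_continuousOn a b f hf (1 / (n + 1)) Nat.one_div_pos_of_nat
  refine ⟨p, Metric.tendstoUniformlyOn_iff.mpr fun ε hε ↦ ?_⟩
  obtain ⟨N, hN⟩ := exists_nat_one_div_lt hε
  filter_upwards [eventually_ge_atTop N] with n hn t ht
  rw [dist_comm, Real.dist_eq]
  refine (hp n t ht).trans (lt_of_le_of_lt ?_ hN)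
  gcongr

open Filter Topology in
lemma SemiconjBy.cfc_real {A : Type*} [Ring A] [StarRing A] [Algebra ℝ A] [TopologicalSpace A]
    [ContinuousFunctionalCalculus ℝ A IsSelfAdjoint] [IsTopologicalRing A] [T2Space A]
    {x a b : A} (h : SemiconjBy x a b) (ha : IsSelfAdjoint a) (hb : IsSelfAdjoint b)
    {f : ℝ → ℝ} (hf : Continuous f) : SemiconjBy x (cfc f a) (cfc f b) := by
  obtain ⟨r, hr⟩ := ((ContinuousFunctionalCalculus.isCompact_spectrum (R := ℝ) a).union
    (ContinuousFunctionalCalculus.isCompact_spectrum (R := ℝ) b)).isBounded.subset_closedBall 0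
  rw [Real.closedBall_eq_Icc, zero_sub, zero_add] at hr
  obtain ⟨p, hp⟩ := exists_polynomial_tendstoUniformlyOn_Icc (a := -r) (b := r) hf.continuousOn
  have hlim {c : A} (hc : spectrum ℝ c ⊆ Set.Icc (-r) r) :
      Tendsto (fun n ↦ cfc (p n).eval c) atTop (𝓝 (cfc f c)) :=
    tendsto_cfc_fun (hp.mono hc) (.of_forall fun n ↦ (p n).continuousOn)
  refine tendsto_nhds_unique (((hlim (by grind)).const_mul x).congr fun n ↦ ?_)
    ((hlim (by grind)).mul_const x)
  rw [cfc_polynomial .., cfc_polynomial ..]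
  exact (h.aeval (p n)).eq

lemma IsSelfAdjoint.mul_eq_one_comm {R : Type*} [Monoid R] [StarMul R] {a b : R}
    (ha : IsSelfAdjoint a) (hb : IsSelfAdjoint b) (h : a * b = 1) : b * a = 1 := by
  simpa [star_mul, ha.star_eq, hb.star_eq] using congrArg star h

lemma mul_self_add_mul_star_eq_one {R : Type*} [Ring R] [StarRing R] {x l l' : R}
    (hl' : IsSelfAdjoint l') (hL : l * l * (1 + x * star x) = 1) (hx : x * l' = l * x) :
    l * l + x * l' * star (x * l') = 1 := by
  calc l * l + x * l' * star (x * l') = l * l + x * l' * l' * star x := by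
        rw [star_mul, hl'.star_eq, mul_assoc (x * l')]
    _ = l * l * (1 + x * star x) := by rw [hx, mul_assoc l x l', hx]; noncomm_ring
    _ = 1 := hL

section CStarAlgebra

variable {A : Type*} [CStarAlgebra A] [PartialOrder A] [StarOrderedRing A]

lemma SemiconjBy.of_mul_self {x c d : A} (hc : 0 ≤ c) (hd : 0 ≤ d)
    (h : SemiconjBy x (c * c) (d * d)) : SemiconjBy x c d := by
  have hsqrt {e : A} (he : 0 ≤ e) : cfc Real.sqrt (e * e) = e := by
    rw [← cfcₙ_eq_cfc, ← CFC.sqrt_eq_real_sqrt _ he.isSelfAdjoint.mul_self_nonneg,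
      CFC.sqrt_mul_self e]
  simpa only [hsqrt hc, hsqrt hd] using h.cfc_real hc.isSelfAdjoint.mul_self_nonneg.isSelfAdjoint
    hd.isSelfAdjoint.mul_self_nonneg.isSelfAdjoint Real.continuous_sqrt

lemma eq_of_mul_self_mul_eq_one {c d s : A} (hc : 0 ≤ c) (hd : 0 ≤ d) (hs : IsSelfAdjoint s)
    (hcs : c * c * s = 1) (hds : d * d * s = 1) : c = d := by
  have hsd : s * (d * d) = 1 :=
    hd.isSelfAdjoint.mul_self_nonneg.isSelfAdjoint.mul_eq_one_comm hs hds
  rw [← CFC.sqrt_mul_self c, left_inv_eq_right_inv hcs hsd, CFC.sqrt_mul_self d]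

lemma isUnit_of_mul_self_mul_one_add {x l : A} (hl : 0 ≤ l) (hL : l * l * (1 + star x * x) = 1) :
    IsUnit l := by
  have hL' : (1 + star x * x) * (l * l) = 1 :=
    hl.isSelfAdjoint.mul_self_nonneg.isSelfAdjoint.mul_eq_one_comm
      ((IsSelfAdjoint.one A).add (.star_mul_self x)) hL
  exact isUnit_iff_exists_and_exists.mpr
    ⟨⟨l * (1 + star x * x), by rwa [← mul_assoc]⟩, ⟨(1 + star x * x) * l, by rwa [mul_assoc]⟩⟩

lemma semiconjBy_of_mul_self_mul_one_add {x l l' : A} (hl : 0 ≤ l) (hl' : 0 ≤ l')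
    (hL : l * l * (1 + x * star x) = 1) (hL' : l' * l' * (1 + star x * x) = 1) :
    SemiconjBy x l' l := by
  refine .of_mul_self hl' hl ?_
  have hS : (1 + star x * x) * (l' * l') = 1 :=
    hl'.isSelfAdjoint.mul_self_nonneg.isSelfAdjoint.mul_eq_one_comm
      ((IsSelfAdjoint.one A).add (.star_mul_self x)) hL'
  calc x * (l' * l') = l * l * (1 + x * star x) * x * (l' * l') := by rw [hL, one_mul]
    _ = l * l * x * ((1 + star x * x) * (l' * l')) := by noncomm_ring
    _ = l * l * x := by rw [hS, mul_one]

end CStarAlgebra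

section Conjugation

open scoped InnerProduct

variable {E : Type*} [NormedAddCommGroup E] [InnerProductSpace ℂ E]

/-- `B = Ā` in the notation `Ā f = (A f*)*`, where `f* = J f`. -/
def IsConjugate (J : E → E) (A B : E →L[ℂ] E) : Prop := ∀ f, B f = J (A (J f))

namespace IsConjugate

variable {J : E → E} {A A' B B' : E →L[ℂ] E}

lemma eq (hA : IsConjugate J A A') (hB : IsConjugate J A B') : A' = B' :=
  ext fun f ↦ (hA f).trans (hB f).symm

lemma symm (hJ : Function.Involutive J) (h : IsConjugate J A A') : IsConjugate J A' A :=
  fun f ↦ by rw [h, hJ, hJ]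

lemma one (hJ : Function.Involutive J) : IsConjugate J 1 1 := fun f ↦ (hJ f).symm

lemma mul (hJ : Function.Involutive J) (hA : IsConjugate J A A') (hB : IsConjugate J B B') :
    IsConjugate J (A * B) (A' * B') := fun f ↦ by
  change A' (B' f) = J (A (B (J f)))
  rw [hA, hB, hJ]

lemma add (hJ_add : ∀ f g, J (f + g) = J f + J g) (hA : IsConjugate J A A')
    (hB : IsConjugate J B B') : IsConjugate J (A + B) (A' + B') := fun f ↦ by
  rw [add_apply, add_apply, hA, hB, hJ_add]

lemma adjoint [CompleteSpace E] (hJ : Function.Involutive J)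
    (hJ_inner : ∀ f g : E, ⟪J f, J g⟫_ℂ = ⟪g, f⟫_ℂ) (h : IsConjugate J A A') :
    IsConjugate J (A†) (A'†) := fun f ↦ by
  refine ext_inner_left ℂ fun g ↦ ?_
  calc ⟪g, (A'†) f⟫_ℂ = ⟪J (A (J g)), J (J f)⟫_ℂ := by
        rw [adjoint_inner_right, h, hJ]
    _ = ⟪(A†) (J f), J g⟫_ℂ := by rw [hJ_inner, adjoint_inner_left]
    _ = ⟪g, J ((A†) (J f))⟫_ℂ := by rw [← hJ_inner, hJ]

lemma isPositive (hJ : Function.Involutive J)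
    (hJ_inner : ∀ f g : E, ⟪J f, J g⟫_ℂ = ⟪g, f⟫_ℂ) (h : IsConjugate J A A')
    (hA : A.IsPositive) : A'.IsPositive := by
  refine ⟨fun f g ↦ ?_, fun f ↦ ?_⟩
  · calc ⟪A' f, g⟫_ℂ = ⟪J (A (J f)), J (J g)⟫_ℂ := by rw [h, hJ]
      _ = ⟪A (J g), J f⟫_ℂ := by rw [hJ_inner, hA.inner_left_eq_inner_right]
      _ = ⟪f, A' g⟫_ℂ := by rw [← hJ_inner, hJ, h]
  · calc 0 ≤ RCLike.re ⟪J f, A (J f)⟫_ℂ := hA.re_inner_nonneg_right _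
      _ = A'.reApplyInnerSelf f := by rw [reApplyInnerSelf, h, ← hJ_inner, hJ]

lemma eq_of_mul_self_mul_one_add [CompleteSpace E] (hJ : Function.Involutive J)
    (hJ_add : ∀ f g, J (f + g) = J f + J g) (hJ_inner : ∀ f g : E, ⟪J f, J g⟫_ℂ = ⟪g, f⟫_ℂ)
    {X L L' Lbar : E →L[ℂ] E} (hX : IsConjugate J (X†) (-X))
    (hL : L.IsPositive) (hL' : 0 ≤ L')
    (hLsq : L * L * (1 + X * X†) = 1) (hL'sq : L' * L' * (1 + X† * X) = 1)
    (hLbar : IsConjugate J L Lbar) : Lbar = L' := by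
  have hXbar : IsConjugate J X (-X†) := by
    simpa using hX.adjoint hJ hJ_inner
  have hS : IsConjugate J (1 + X * X†) (1 + X† * X) := by
    simpa using (IsConjugate.one hJ).add hJ_add (hXbar.mul hJ hX)
  have hLbarsq : Lbar * Lbar * (1 + X† * X) = 1 :=
    ((hLbar.mul hJ hLbar).mul hJ hS).eq (by rw [hLsq]; exact IsConjugate.one hJ)
  exact eq_of_mul_self_mul_eq_one
    ((nonneg_iff_isPositive Lbar).mpr (hLbar.isPositive hJ hJ_inner hL)) hL'
    ((IsSelfAdjoint.one _).add (.star_mul_self X)) hLbarsq hL'sq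

end IsConjugate

end Conjugation

theorem lift_of_X_general
    -- the antiunitary involution `f ↦ f* = J f`
    (J : H → H)
    (hJ_add : ∀ f g, J (f + g) = J f + J g)
    (hJ_invol : ∀ f, J (J f) = f)
    (hJ_inner : ∀ f g : H, ⟪J f, J g⟫_ℂ = ⟪g, f⟫_ℂ)
    -- `X` is skew symmetric and Hilbert–Schmidt
    (X Xt : H →L[ℂ] H)
    (hXt : ∀ f, Xt f = J (adjoint X (J f)))
    (hXskew : Xt = -X)
    -- `L = (I + X X†)^{-1/2}`: the inverse of the positive square root of `I + X X†`
    (L : H →L[ℂ] H)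
    (hLpos : L.IsPositive)
    (hLsq : (L ∘L L) ∘L (1 + X ∘L adjoint X) = 1)
    -- `L' = (I + X† X)^{-1/2}`, so that `W = X L'`
    (L' : H →L[ℂ] H)
    (hL'pos : L'.IsPositive)
    (hL'sq : (L' ∘L L') ∘L (1 + adjoint X ∘L X) = 1)
    (W : H →L[ℂ] H)
    (hW : W = X ∘L L')
    -- conjugates and transposes of `L` and `W`
    (Lbar Lt Wbar Wt : H →L[ℂ] H)
    (hLbar : ∀ f, Lbar f = J (L (J f)))
    (hLt : ∀ f, Lt f = J (adjoint L (J f)))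
    (hWbar : ∀ f, Wbar f = J (W (J f)))
    (hWt : ∀ f, Wt f = J (adjoint W (J f))) :
    L.IsPositive ∧
    Wt = -W ∧
    L ∘L adjoint L + W ∘L adjoint W = 1 ∧
    adjoint L ∘L L + Wt ∘L Wbar = 1 ∧
    L ∘L Wt + W ∘L Lt = 0 ∧
    adjoint L ∘L W + Wt ∘L Lbar = 0 ∧
    W ∘L Ring.inverse Lbar = X := by
  have hJ : Function.Involutive J := hJ_invol
  have hL0 : 0 ≤ L := (nonneg_iff_isPositive L).mpr hLpos
  have hL'0 : 0 ≤ L' := (nonneg_iff_isPositive L').mpr hL'pos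
  replace hLsq : L * L * (1 + X * adjoint X) = 1 := hLsq
  replace hL'sq : L' * L' * (1 + adjoint X * X) = 1 := hL'sq
  replace hW : W = X * L' := hW
  have hXadj : IsConjugate J (adjoint X) (-X) := hXskew ▸ hXt
  have hLbar_eq : Lbar = L' :=
    IsConjugate.eq_of_mul_self_mul_one_add hJ hJ_add hJ_inner hXadj hLpos hL'0 hLsq hL'sq hLbar
  have hXL : X * L' = L * X := semiconjBy_of_mul_self_mul_one_add hL0 hL'0 hLsq hL'sq
  have hLt_eq : Lt = L' :=
    IsConjugate.eq (hLpos.isSelfAdjoint.adjoint_eq ▸ hLt) (hLbar_eq ▸ hLbar)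
  have hWt_eq : Wt = -W := by
    have hW' : IsConjugate J (adjoint W) (L * -X) := by
      rw [hW, ← star_eq_adjoint, star_mul, hL'pos.isSelfAdjoint.star_eq, star_eq_adjoint]
      exact IsConjugate.mul hJ (hLbar_eq ▸ IsConjugate.symm hJ hLbar) hXadj
    rw [IsConjugate.eq hWt hW', hW, hXL, mul_neg]
  have hWbar_eq : Wbar = -adjoint W := by
    have hW' := IsConjugate.adjoint hJ hJ_inner hWt
    rw [adjoint_adjoint, hWt_eq, map_neg] at hW'
    exact IsConjugate.eq hWbar hW'
  have hWL : W * L' = L * W := by rw [hW, hXL, mul_assoc, ← hXL]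
  have hLW : L * L + W * adjoint W = 1 :=
    hW ▸ mul_self_add_mul_star_eq_one hL'pos.isSelfAdjoint hLsq hXL
  refine ⟨hLpos, hWt_eq, ?_, ?_, ?_, ?_, ?_⟩ <;>
    simp only [← mul_def, hLpos.isSelfAdjoint.adjoint_eq, hLbar_eq, hWt_eq, hWbar_eq, hLt_eq]
  · exact hLW
  · rwa [neg_mul_neg]
  · rw [hWL, mul_neg, neg_add_cancel]
  · rw [neg_mul, hWL, add_neg_cancel]
  · rw [hW, mul_assoc, Ring.mul_inverse_cancel _ (isUnit_of_mul_self_mul_one_add hL'0 hL'sq),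
      mul_one]

/-- For a skew-symmetric Hilbert–Schmidt operator `X`, the operators
`L := (I + X X†)^{−1/2}` (characterized as the positive operator with
`L² (I + X X†) = I`) and `W := X (I + X† X)^{−1/2}` satisfy: `L` is positive, `W` is skew
symmetric, the pair `(L, W)` satisfies the orthogonality relations, and `W L̄⁻¹ = X`. -/
theorem lift_of_X
    [TopologicalSpace.SeparableSpace H]
    -- the antiunitary involution `f ↦ f* = J f`
    (J : H → H)
    (hJ_add : ∀ f g, J (f + g) = J f + J g)
    (hJ_smul : ∀ (c : ℂ) (f : H), J (c • f) = (starRingEnd ℂ) c • J f)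
    (hJ_invol : ∀ f, J (J f) = f)
    (hJ_inner : ∀ f g : H, ⟪J f, J g⟫_ℂ = ⟪g, f⟫_ℂ)
    -- `X` is skew symmetric and Hilbert–Schmidt
    (X Xt : H →L[ℂ] H)
    (hXt : ∀ f, Xt f = J (adjoint X (J f)))
    (hXskew : Xt = -X)
    (hXHS : IsHilbertSchmidt X)
    -- `L = (I + X X†)^{-1/2}`: the inverse of the positive square root of `I + X X†`
    (L : H →L[ℂ] H)
    (hLpos : L.IsPositive)
    (hLsq : (L ∘L L) ∘L (1 + X ∘L adjoint X) = 1)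
    -- `L' = (I + X† X)^{-1/2}`, so that `W = X L'`
    (L' : H →L[ℂ] H)
    (hL'pos : L'.IsPositive)
    (hL'sq : (L' ∘L L') ∘L (1 + adjoint X ∘L X) = 1)
    (W : H →L[ℂ] H)
    (hW : W = X ∘L L')
    -- conjugates and transposes of `L` and `W`
    (Lbar Lt Wbar Wt : H →L[ℂ] H)
    (hLbar : ∀ f, Lbar f = J (L (J f)))
    (hLt : ∀ f, Lt f = J (adjoint L (J f)))
    (hWbar : ∀ f, Wbar f = J (W (J f)))
    (hWt : ∀ f, Wt f = J (adjoint W (J f))) :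
    L.IsPositive ∧
    Wt = -W ∧
    L ∘L adjoint L + W ∘L adjoint W = 1 ∧
    adjoint L ∘L L + Wt ∘L Wbar = 1 ∧
    L ∘L Wt + W ∘L Lt = 0 ∧
    adjoint L ∘L W + Wt ∘L Lbar = 0 ∧
    W ∘L Ring.inverse Lbar = X :=
  lift_of_X_general J hJ_add hJ_invol hJ_inner X Xt hXt hXskew L hLpos hLsq L' hL'pos hL'sq W hW
    Lbar Lt Wbar Wt hLbar hLt hWbar hWt
end

section
/- Let F : H × H → ℂ be an entire analytic function (analytic on all of H × H in the sense of analytic functions between complex Banach spaces). If F(ξ*, ξ) = 0 for every ξ ∈ H, then F is identically zero; equivalently, a function φ(ξ,η) on H × H that is antianalytic in ξ and analytic in η is uniquely determined by its values on the diagonal ξ = η. -/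
/-!
Fix `(a, b)` and put `η = b - a*`. The function `g(u, v) = F(a + u η*, a* + v η)` is entire on
`ℂ²`, and since `(a* + z η)* = a + z̄ η*` it vanishes on the totally real plane
`{(z̄, z)}`. In the coordinates `u = s - i t`, `v = s + i t` this plane is `ℝ²`, and an entire
function of two variables vanishing on `ℝ²` is zero by the identity theorem applied in each
variable separately. Hence `F(a, b) = g(0, 1) = 0`.
-/

open scoped InnerProductSpace ComplexConjugate
open Set Filter Topology

namespace Complex

variable {E : Type*} [NormedAddCommGroup E] [NormedSpace ℂ E]

theorem eq_zero_of_analyticOnNhd_of_eq_zero_ofReal {f : ℂ → E}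
    (hf : AnalyticOnNhd ℂ f univ) (h : ∀ x : ℝ, f x = 0) : f = 0 := by
  have hreal : Tendsto ((↑) : ℝ → ℂ) (𝓝[≠] 0) (𝓝[≠] 0) :=
    continuous_ofReal.continuousWithinAt.tendsto_nhdsWithin fun _ hx ↦ by simpa using hx
  exact hf.eq_of_frequently_eq analyticOnNhd_const (hreal.frequently (.of_forall h))

theorem eq_zero_of_analyticOnNhd_prod_of_eq_zero_ofReal {g : ℂ × ℂ → E}
    (hg : AnalyticOnNhd ℂ g univ) (h : ∀ s t : ℝ, g (s, t) = 0) : g = 0 := by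
  have hleft (v : ℂ) : AnalyticOnNhd ℂ (fun u ↦ g (u, v)) univ := fun u _ ↦
    (hg _ trivial).comp (analyticAt_id.prod analyticAt_const)
  have hright (u : ℂ) : AnalyticOnNhd ℂ (fun v ↦ g (u, v)) univ := fun v _ ↦
    (hg _ trivial).comp (analyticAt_const.prod analyticAt_id)
  have hline (t : ℝ) (u : ℂ) : g (u, t) = 0 :=
    congrFun (eq_zero_of_analyticOnNhd_of_eq_zero_ofReal (hleft t) (h · t)) u
  funext ⟨u, v⟩
  exact congrFun (eq_zero_of_analyticOnNhd_of_eq_zero_ofReal (hright u) (hline · u)) v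

theorem eq_zero_of_analyticOnNhd_prod_of_eq_zero_conj_diag {g : ℂ × ℂ → E}
    (hg : AnalyticOnNhd ℂ g univ) (h : ∀ z : ℂ, g (conj z, z) = 0) : g = 0 := by
  set L : ℂ × ℂ → ℂ × ℂ := fun p ↦ (p.1 - I * p.2, p.1 + I * p.2)
  have hL : AnalyticOnNhd ℂ (g ∘ L) univ := fun p _ ↦
    (hg _ trivial).comp ((analyticAt_fst.sub (analyticAt_const.mul analyticAt_snd)).prod
      (analyticAt_fst.add (analyticAt_const.mul analyticAt_snd)))
  have hgL : g ∘ L = 0 := by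
    refine eq_zero_of_analyticOnNhd_prod_of_eq_zero_ofReal hL fun s t ↦ ?_
    have hconj : (s : ℂ) - I * t = conj ((s : ℂ) + I * t) := by
      simp only [map_add, map_mul, conj_ofReal, conj_I]
      ring
    simpa only [Function.comp_apply, L, hconj] using h (s + I * t)
  funext ⟨u, v⟩
  have hLuv : L ((u + v) / 2, I * (u - v) / 2) = (u, v) := by
    simp only [L, Prod.mk.injEq]
    constructor <;> ring_nf <;> simp only [I_sq] <;> ring
  simpa only [Function.comp_apply, hLuv, Pi.zero_apply] using
    congrFun hgL ((u + v) / 2, I * (u - v) / 2)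

end Complex

theorem analytic_determined_on_diagonal_general
    {H : Type*} [NormedAddCommGroup H] [InnerProductSpace ℂ H]
    -- the antiunitary involution `f ↦ f* = J f`
    (J : H → H)
    (hJ_add : ∀ f g, J (f + g) = J f + J g)
    (hJ_smul : ∀ (c : ℂ) (f : H), J (c • f) = (starRingEnd ℂ) c • J f)
    (hJ_invol : ∀ f, J (J f) = f)
    (F : H × H → ℂ)
    (hF : ∀ x : H × H, AnalyticAt ℂ F x)
    (h0 : ∀ ξ : H, F (J ξ, ξ) = 0) :
    ∀ x : H × H, F x = 0 := by
  rintro ⟨a, b⟩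
  set η := b - J a
  set g : ℂ × ℂ → ℂ := fun p ↦ F (a + p.1 • J η, J a + p.2 • η)
  have hg : AnalyticOnNhd ℂ g univ := fun p _ ↦
    (hF _).comp ((analyticAt_const.add (analyticAt_fst.smul analyticAt_const)).prod
      (analyticAt_const.add (analyticAt_snd.smul analyticAt_const)))
  have hdiag (z : ℂ) : g (conj z, z) = 0 := by
    have hJ : J (J a + z • η) = a + conj z • J η := by rw [hJ_add, hJ_smul, hJ_invol]
    simpa only [g, hJ] using h0 (J a + z • η)
  have hzero :=
    congrFun (Complex.eq_zero_of_analyticOnNhd_prod_of_eq_zero_conj_diag hg hdiag) (0, 1)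
  simpa only [g, η, zero_smul, add_zero, one_smul, add_sub_cancel, Pi.zero_apply] using hzero

/-- An entire analytic function `F : H × H → ℂ` vanishing on the
antiholomorphic diagonal `{(ξ*, ξ) : ξ ∈ H}` vanishes identically; equivalently, a
function antianalytic in the first and analytic in the second variable is determined by
its values on the diagonal. -/
theorem analytic_determined_on_diagonal
    {H : Type*} [NormedAddCommGroup H] [InnerProductSpace ℂ H] [CompleteSpace H]
    [TopologicalSpace.SeparableSpace H]
    -- the antiunitary involution `f ↦ f* = J f`
    (J : H → H)
    (hJ_add : ∀ f g, J (f + g) = J f + J g)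
    (hJ_smul : ∀ (c : ℂ) (f : H), J (c • f) = (starRingEnd ℂ) c • J f)
    (hJ_invol : ∀ f, J (J f) = f)
    (hJ_inner : ∀ f g : H, ⟪J f, J g⟫_ℂ = ⟪g, f⟫_ℂ)
    (F : H × H → ℂ)
    (hF : ∀ x : H × H, AnalyticAt ℂ F x)
    (h0 : ∀ ξ : H, F (J ξ, ξ) = 0) :
    ∀ x : H × H, F x = 0 :=
  analytic_determined_on_diagonal_general J hJ_add hJ_smul hJ_invol F hF h0
end
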